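/- arXiv:1611.00827 — 7 statements merged into one kernel-verified Lean document; each statement's English description precedes it below -/
import Mathlib

section
/- Let n ≥ 3 and m ≥ 3, and let L : M_n(ℂ) → M_n(ℂ) be a ℂ-linear map. Then tr(L(X) · X^{m−1}) = 0 for all X ∈ M_n(ℂ) if and only if there exists B ∈ M_n(ℂ) such that L(X) = BX − XB for all X ∈ M_n(ℂ). (The Lie algebra annihilator of tr(X^m) in End(M_n(ℂ)) is exactly the image of the adjoint representation ad(B) = [B, ·].) -/
/-!
Write `k = m - 1 ≥ 2`. Differentiating `t ↦ tr (L (P + t Y) * (P + t Y) ^ k)` at `t = 0`, where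
`P = v wᵀ` is a rank-one idempotent, turns the hypothesis into the linear identity
`wᵀ (L Y + Y L(P) + L(P) Y) v = 0`; the term `P L(P) P` drops out because `tr (L(P) P) = 0`,
which is the case `Y = P`. Taking `v, w` among `e_i` and `e_i + e_j` and `Y` a matrix unit, these
identities force every entry of `L` to vanish once `L` has been shifted by a commutator map
`[B, ·]` (which satisfies them too) killing the entries `L(E_yy)_xy` and `L(E_xo)_xo`: first
`L(E_ii) = 0`, then the diagonal of every `L(Y)` vanishes, then `L(E_ab) = c_ab E_ab`, where `c`
is a skew cocycle (from `P = (e_i + e_l)(e_i + e_j)ᵀ`) vanishing on the pairs `(x, o)`.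
-/

open Matrix

section FirstVariation

variable {𝕜 𝔸 : Type*} [NontriviallyNormedField 𝕜] [NormedRing 𝔸] [NormedAlgebra 𝕜 𝔸]

theorem firstVariation_mul_pow_eq_zero (τ : 𝔸 →L[𝕜] 𝕜) (L : 𝔸 →L[𝕜] 𝔸) {k : ℕ}
    (h : ∀ x, τ (L x * x ^ k) = 0) (p y : 𝔸) :
    τ (L y * p ^ k + L p * ∑ i ∈ Finset.range k, p ^ (k.pred - i) * y * p ^ i) = 0 := by
  have hline : HasDerivAt (fun t : 𝕜 ↦ p + t • y) y 0 := by
    simpa using ((hasDerivAt_id (0 : 𝕜)).smul_const y).const_add p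
  have hf := τ.hasFDerivAt.comp_hasDerivAt _
    ((L.hasFDerivAt.comp_hasDerivAt _ hline).mul (hline.fun_pow' k))
  simp only [Function.comp_def, Pi.mul_apply, h, zero_smul, add_zero] at hf
  exact hf.unique (hasDerivAt_const _ _)

end FirstVariation

theorem IsIdempotentElem.sum_pow_mul_mul_pow {R : Type*} [Ring R] {p : R}
    (hp : IsIdempotentElem p) (y : R) {k : ℕ} (hk : 2 ≤ k) :
    ∑ i ∈ Finset.range k, p ^ (k.pred - i) * y * p ^ i =
      p * y + y * p + (k - 2 : ℕ) • (p * y * p) := by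
  obtain ⟨j, rfl⟩ := Nat.exists_eq_add_of_le' hk
  have hmid : ∀ i ∈ Finset.range j,
      p ^ ((j + 2).pred - (i + 1)) * y * p ^ (i + 1) = p * y * p := fun i hi ↦ by
    rw [hp.pow_eq (by simp at hi ⊢; omega), hp.pow_eq (by omega)]
  rw [Finset.sum_range_succ, Finset.sum_range_succ', Finset.sum_congr rfl hmid]
  simp only [Finset.sum_const, Finset.card_range, Nat.pred_eq_sub_one, Nat.add_one_sub_one,
    tsub_zero, tsub_self, add_tsub_cancel_right, pow_zero, mul_one, one_mul,
    hp.pow_eq (Nat.succ_ne_zero j)]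
  abel

namespace Matrix

section RankOne

variable {ι R : Type*} [Fintype ι] [CommSemiring R]

theorem trace_mul_vecMulVec (M : Matrix ι ι R) (v w : ι → R) :
    trace (M * vecMulVec v w) = w ⬝ᵥ (M *ᵥ v) := by
  rw [mul_vecMulVec, trace_vecMulVec, dotProduct_comm]

theorem vecMulVec_mulVec_eq_smul (v w u : ι → R) : vecMulVec v w *ᵥ u = (w ⬝ᵥ u) • v := by
  rw [vecMulVec_mulVec, op_smul_eq_smul]

theorem vecMulVec_mul_mul_vecMulVec (M : Matrix ι ι R) (v w : ι → R) :
    vecMulVec v w * M * vecMulVec v w = (w ⬝ᵥ (M *ᵥ v)) • vecMulVec v w := by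
  rw [vecMulVec_mul, vecMulVec_mul_vecMulVec, dotProduct_mulVec, vecMulVec_smul]

theorem isIdempotentElem_vecMulVec {v w : ι → R} (h : w ⬝ᵥ v = 1) :
    IsIdempotentElem (vecMulVec v w) := by
  rw [IsIdempotentElem, vecMulVec_mul_vecMulVec, h, one_smul]

theorem single_dotProduct_mulVec_single [DecidableEq ι] (M : Matrix ι ι R) (i j : ι) :
    Pi.single i 1 ⬝ᵥ (M *ᵥ Pi.single j 1) = M i j := by
  simp

end RankOne

variable {ι K : Type*} [Fintype ι] [DecidableEq ι] [Field K]

def IsStationaryAtRankOneIdempotents (L : Matrix ι ι K →ₗ[K] Matrix ι ι K) : Prop :=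
  ∀ v w : ι → K, w ⬝ᵥ v = 1 → ∀ Y,
    w ⬝ᵥ ((L Y + Y * L (vecMulVec v w) + L (vecMulVec v w) * Y) *ᵥ v) = 0

namespace IsStationaryAtRankOneIdempotents

variable {L : Matrix ι ι K →ₗ[K] Matrix ι ι K} (hR : IsStationaryAtRankOneIdempotents L)
include hR

theorem at_single (i : ι) (Y : Matrix ι ι K) :
    (L Y + Y * L (single i i 1) + L (single i i 1) * Y) i i = 0 := by
  have h := hR (Pi.single i 1) (Pi.single i 1) (by simp) Y
  rwa [← single_eq_single_vecMulVec_single, single_dotProduct_mulVec_single] at h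

theorem at_column {x y : ι} (hxy : x ≠ y) (Y : Matrix ι ι K) :
    let N := L Y + Y * L (single x x 1 + single y x 1) + L (single x x 1 + single y x 1) * Y
    N x x + N x y = 0 := by
  have h := hR (Pi.single x 1 + Pi.single y 1) (Pi.single x 1) (by simp [hxy.symm]) Y
  rwa [add_vecMulVec, ← single_eq_single_vecMulVec_single, ← single_eq_single_vecMulVec_single,
    mulVec_add, dotProduct_add, single_dotProduct_mulVec_single,
    single_dotProduct_mulVec_single] at h

theorem at_row {x y : ι} (hxy : x ≠ y) (Y : Matrix ι ι K) :
    let N := L Y + Y * L (single x x 1 + single x y 1) + L (single x x 1 + single x y 1) * Y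
    N x x + N y x = 0 := by
  have h := hR (Pi.single x 1) (Pi.single x 1 + Pi.single y 1) (by simp [hxy]) Y
  rwa [vecMulVec_add, ← single_eq_single_vecMulVec_single, ← single_eq_single_vecMulVec_single,
    add_dotProduct, single_dotProduct_mulVec_single, single_dotProduct_mulVec_single] at h

theorem at_rect {i j l : ι} (hij : i ≠ j) (hil : i ≠ l) (hjl : j ≠ l) (Y : Matrix ι ι K) :
    let P := single i i 1 + single l i 1 + single i j 1 + single l j 1
    let N := L Y + Y * L P + L P * Y
    N i i + N j i + (N i l + N j l) = 0 := by
  have h := hR (Pi.single i 1 + Pi.single l 1) (Pi.single i 1 + Pi.single j 1)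
    (by simp [hij, hil.symm, hjl.symm]) Y
  rwa [vecMulVec_add, add_vecMulVec, add_vecMulVec, ← single_eq_single_vecMulVec_single,
    ← single_eq_single_vecMulVec_single, ← single_eq_single_vecMulVec_single,
    ← single_eq_single_vecMulVec_single, ← add_assoc, mulVec_add, dotProduct_add,
    add_dotProduct, add_dotProduct, single_dotProduct_mulVec_single,
    single_dotProduct_mulVec_single, single_dotProduct_mulVec_single,
    single_dotProduct_mulVec_single] at h

theorem apply_single_self_apply_diag {i x : ι} (hix : i ≠ x) : L (single x x 1) i i = 0 := by
  simpa [hix] using hR.at_single i (single x x 1)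

theorem apply_single_self_apply_off {i x y : ι} (hxy : x ≠ y) (hix : i ≠ x) (hiy : i ≠ y) :
    L (single i i 1) x y = 0 := by
  simpa [hix.symm, hiy.symm, hR.apply_single_self_apply_diag hix.symm] using
    hR.at_column hxy (single i i 1)

variable [CharZero K]

theorem apply_single_self_apply_self (i : ι) : L (single i i 1) i i = 0 := by
  have h := hR.at_single i (single i i 1)
  simp only [add_apply, single_mul_apply_same, mul_single_apply_same, one_mul, mul_one] at h
  linear_combination h / 3

theorem apply_single_apply_swap {a b : ι} (hab : a ≠ b) : L (single a b 1) b a = 0 := by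
  have h₁ := hR.at_single b (single a b 1)
  have h₂ := hR.at_column hab.symm (single a b 1)
  simp only [add_apply, map_add, single_mul_apply_of_ne, mul_single_apply_same,
    mul_single_apply_of_ne, hab, hab.symm, ne_eq, not_false_eq_true, mul_one, add_zero] at h₁ h₂
  linear_combination (h₂ - h₁) / 2

section Normalized

variable (hN : ∀ x y, x ≠ y → L (single y y 1) x y = 0)
include hN

theorem apply_single_self_apply_row {i y : ι} (hiy : i ≠ y) : L (single i i 1) i y = 0 := by
  simpa [hiy, hR.apply_single_self_apply_diag hiy, hN i y hiy,
    hR.apply_single_apply_swap hiy.symm] using hR.at_column hiy (single y y 1)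

theorem apply_single_self (i : ι) : L (single i i 1) = 0 := by
  ext x y
  rcases eq_or_ne x y with rfl | hxy
  · rcases eq_or_ne x i with rfl | hxi
    · exact hR.apply_single_self_apply_self x
    · exact hR.apply_single_self_apply_diag hxi
  rcases eq_or_ne y i with rfl | hyi
  · exact hN x y hxy
  rcases eq_or_ne x i with rfl | hxi
  · exact hR.apply_single_self_apply_row hN hxy
  · exact hR.apply_single_self_apply_off hxy hxi.symm hyi.symm

theorem apply_apply_self (Y : Matrix ι ι K) (i : ι) : L Y i i = 0 := by
  simpa [hR.apply_single_self hN] using hR.at_single i Y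

theorem apply_single_apply_of_ne {a b x y : ι} (hxy : x ≠ y) (hxa : x ≠ a) (hbx : b ≠ x)
    (hby : b ≠ y) : L (single a b 1) x y = 0 := by
  simpa [hR.apply_single_self hN, hR.apply_apply_self hN, hxa, hbx.symm, hby.symm] using
    hR.at_column hxy (single a b 1)

theorem apply_single_apply_row_right {a b y : ι} (hab : a ≠ b) (hay : a ≠ y) (hby : b ≠ y) :
    L (single a b 1) b y = 0 := by
  simpa [hR.apply_single_self hN, hR.apply_apply_self hN, hay.symm, hby.symm, hab.symm] using
    hR.at_row hby.symm (single a b 1)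

theorem apply_single_apply_row_left {a b y : ι} (hab : a ≠ b) (hay : a ≠ y) (hby : b ≠ y) :
    L (single a b 1) a y = 0 := by
  simpa [hR.apply_single_self hN, hR.apply_apply_self hN, hay.symm, hby.symm,
    hR.apply_single_apply_of_ne hN hby hby hab hay] using hR.at_row hay.symm (single a b 1)

theorem apply_single_apply_col_right {a b x : ι} (hab : a ≠ b) (hxa : x ≠ a) (hbx : b ≠ x) :
    L (single a b 1) x b = 0 := by
  simpa [hR.apply_single_self hN, hR.apply_apply_self hN, hxa, hbx.symm,
    hR.apply_single_apply_row_right hN hbx hab.symm hxa] using hR.at_column hbx.symm (single a b 1)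

theorem apply_single_of_ne {a b : ι} (hab : a ≠ b) :
    L (single a b 1) = single a b (L (single a b 1) a b) := by
  ext x y
  rcases eq_or_ne x a with rfl | hxa
  · rcases eq_or_ne y b with rfl | hyb
    · rw [single_apply_same]
    rw [single_apply_of_col_ne _ _ hyb.symm]
    rcases eq_or_ne x y with rfl | hxy
    · exact hR.apply_apply_self hN _ x
    · exact hR.apply_single_apply_row_left hN hab hxy hyb.symm
  rw [single_apply_of_row_ne hxa.symm]
  rcases eq_or_ne x y with rfl | hxy
  · exact hR.apply_apply_self hN _ x
  rcases eq_or_ne x b with rfl | hxb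
  · rcases eq_or_ne y a with rfl | hya
    · exact hR.apply_single_apply_swap hab
    · exact hR.apply_single_apply_row_right hN hab hya.symm hxy
  rcases eq_or_ne y b with rfl | hyb
  · exact hR.apply_single_apply_col_right hN hab hxa hxb.symm
  · exact hR.apply_single_apply_of_ne hN hxy hxa hxb.symm hyb.symm

theorem apply_single_apply_add_swap {a b : ι} (hab : a ≠ b) :
    L (single a b 1) a b + L (single b a 1) b a = 0 := by
  simpa [hR.apply_single_self hN, hR.apply_apply_self hN, hab, add_comm] using
    hR.at_column hab (single a b 1)

theorem apply_single_apply_cocycle {i j l : ι} (hij : i ≠ j) (hil : i ≠ l) (hjl : j ≠ l) :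
    L (single i j 1) i j + L (single j l 1) j l + L (single l i 1) l i = 0 := by
  have h := hR.at_rect hij hil hjl (single j l 1)
  simp only [map_add, hR.apply_single_self hN, zero_add] at h
  rw [hR.apply_single_of_ne hN hij, hR.apply_single_of_ne hN hil.symm,
    hR.apply_single_of_ne hN hjl.symm, hR.apply_single_of_ne hN hjl] at h
  simp only [add_apply, single_apply_same, single_apply_of_ne, single_mul_apply_same,
    single_mul_apply_of_ne, mul_single_apply_same, mul_single_apply_of_ne, hij, hil, hjl, hij.symm,
    hil.symm, hjl.symm, ne_eq, not_false_eq_true, and_true, and_false, and_self, one_mul, mul_one,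
    mul_zero, zero_add, add_zero] at h
  linear_combination h

theorem eq_zero {o : ι} (hN₂ : ∀ x, L (single x o 1) x o = 0) : L = 0 := by
  have hc : ∀ a b, a ≠ b → L (single a b 1) a b = 0 := by
    intro a b hab
    rcases eq_or_ne b o with rfl | hbo
    · exact hN₂ a
    rcases eq_or_ne a o with rfl | hao
    · linear_combination hR.apply_single_apply_add_swap hN hab - hN₂ b
    · linear_combination hR.apply_single_apply_cocycle hN hao.symm hbo.symm hab - hN₂ b -
        hR.apply_single_apply_add_swap hN hao + hN₂ a
  refine ext_linearMap (h := fun a b ↦ LinearMap.ext_ring ?_)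
  rcases eq_or_ne a b with rfl | hab
  · exact hR.apply_single_self hN a
  · simpa [hc a b hab] using hR.apply_single_of_ne hN hab

end Normalized

end IsStationaryAtRankOneIdempotents

theorem IsStationaryAtRankOneIdempotents.sub {L M : Matrix ι ι K →ₗ[K] Matrix ι ι K}
    (hL : IsStationaryAtRankOneIdempotents L) (hM : IsStationaryAtRankOneIdempotents M) :
    IsStationaryAtRankOneIdempotents (L - M) := by
  intro v w hvw Y
  set P := vecMulVec v w
  have h : (L - M) Y + Y * (L - M) P + (L - M) P * Y =
      (L Y + Y * L P + L P * Y) - (M Y + Y * M P + M P * Y) := by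
    simp only [LinearMap.sub_apply]
    noncomm_ring
  rw [h, sub_mulVec, dotProduct_sub, hL v w hvw Y, hM v w hvw Y, sub_zero]

theorem isStationaryAtRankOneIdempotents_mulLeft_sub_mulRight (B : Matrix ι ι K) :
    IsStationaryAtRankOneIdempotents (LinearMap.mulLeft K B - LinearMap.mulRight K B) := by
  intro v w hvw Y
  simp only [LinearMap.sub_apply, LinearMap.mulLeft_apply, LinearMap.mulRight_apply, mul_sub,
    sub_mul, add_mulVec, sub_mulVec, ← mulVec_mulVec, vecMulVec_mulVec_eq_smul, mulVec_smul,
    dotProduct_add, dotProduct_sub, dotProduct_smul, smul_eq_mul, hvw]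
  ring

theorem IsStationaryAtRankOneIdempotents.exists_eq_commutator [CharZero K]
    {L : Matrix ι ι K →ₗ[K] Matrix ι ι K} (hR : IsStationaryAtRankOneIdempotents L) :
    ∃ B : Matrix ι ι K, ∀ X, L X = B * X - X * B := by
  rcases isEmpty_or_nonempty ι with _ | ⟨⟨o⟩⟩
  · exact ⟨0, fun X ↦ Subsingleton.elim _ _⟩
  let B : Matrix ι ι K :=
    of fun x y ↦ if x = y then L (single x o 1) x o else L (single y y 1) x y
  have hB := (hR.sub (isStationaryAtRankOneIdempotents_mulLeft_sub_mulRight B)).eq_zero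
    (o := o) ?_ ?_
  · exact ⟨B, fun X ↦ by simpa [sub_eq_zero] using LinearMap.congr_fun hB X⟩
  · intro x y hxy
    simp [B, hxy]
  · intro x
    simp [B, hR.apply_single_self_apply_self o]

section Analytic

variable {𝕜 : Type*} [RCLike 𝕜]

attribute [local instance] Matrix.linftyOpNormedRing Matrix.linftyOpNormedAlgebra

theorem isStationaryAtRankOneIdempotents_of_trace_mul_pow_eq_zero
    (L : Matrix ι ι 𝕜 →ₗ[𝕜] Matrix ι ι 𝕜) {k : ℕ} (hk : 2 ≤ k)
    (hL : ∀ X, trace (L X * X ^ k) = 0) : IsStationaryAtRankOneIdempotents L := by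
  intro v w hvw Y
  set P := vecMulVec v w
  have hP : IsIdempotentElem P := isIdempotentElem_vecMulVec hvw
  have hvar : ∀ Y, trace (L Y * P + L P * (P * Y + Y * P + (k - 2 : ℕ) • (P * Y * P))) = 0 := by
    intro Y
    have h := firstVariation_mul_pow_eq_zero (traceLinearMap ι 𝕜 𝕜).toContinuousLinearMap
      L.toContinuousLinearMap hL P Y
    rwa [hP.sum_pow_mul_mul_pow Y hk, hP.pow_eq (by omega)] at h
  have hLPP : trace (L P * P) = 0 := by
    have h := hvar P
    rw [hP.eq, hP.eq, mul_add, mul_add, mul_smul_comm, trace_add, trace_add, trace_add,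
      trace_smul, nsmul_eq_mul, Nat.cast_sub hk] at h
    have hk' : ((k : 𝕜) + 1) * trace (L P * P) = 0 := by linear_combination h
    exact (mul_eq_zero.mp hk').resolve_left (Nat.cast_add_one_ne_zero k)
  have hPYP : trace (L P * (P * Y * P)) = 0 := by
    rw [← mul_assoc, trace_mul_cycle, ← mul_assoc, vecMulVec_mul_mul_vecMulVec,
      ← trace_mul_vecMulVec, hLPP, zero_smul, zero_mul, trace_zero]
  have h := hvar Y
  rw [mul_add, mul_add, mul_smul_comm, trace_add, trace_add, trace_smul, hPYP, smul_zero,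
    add_zero, trace_add, ← mul_assoc, ← mul_assoc (L P) Y, trace_mul_comm (L P * P),
    ← mul_assoc] at h
  simpa only [P, trace_mul_vecMulVec, add_mulVec, dotProduct_add, add_assoc] using h

end Analytic

theorem trace_commutator_mul_pow {R : Type*} [CommRing R] (B X : Matrix ι ι R) (k : ℕ) :
    trace ((B * X - X * B) * X ^ k) = 0 := by
  rw [sub_mul, trace_sub, mul_assoc, mul_assoc, trace_mul_comm X, mul_assoc, ← pow_succ,
    ← pow_succ', sub_self]

end Matrix

theorem annihilator_of_power_trace_general (n m : ℕ) (hm : 3 ≤ m)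
    (L : Matrix (Fin n) (Fin n) ℂ →ₗ[ℂ] Matrix (Fin n) (Fin n) ℂ) :
    (∀ X : Matrix (Fin n) (Fin n) ℂ, (L X * X ^ (m - 1)).trace = 0) ↔
      ∃ B : Matrix (Fin n) (Fin n) ℂ,
        ∀ X : Matrix (Fin n) (Fin n) ℂ, L X = B * X - X * B := by
  refine ⟨fun hL ↦ (isStationaryAtRankOneIdempotents_of_trace_mul_pow_eq_zero L
    (by omega) hL).exists_eq_commutator, ?_⟩
  rintro ⟨B, hB⟩ X
  rw [hB]
  exact trace_commutator_mul_pow B X (m - 1)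

/-- The Lie algebra annihilator of `tr(X^m)` in `End(M_n(ℂ))` is exactly the
image of the adjoint representation: a linear map `L` on `n × n` complex
matrices satisfies `tr(L(X) · X^(m-1)) = 0` for all `X` iff `L(X) = BX - XB`
for some matrix `B`. -/
theorem annihilator_of_power_trace (n m : ℕ) (hn : 3 ≤ n) (hm : 3 ≤ m)
    (L : Matrix (Fin n) (Fin n) ℂ →ₗ[ℂ] Matrix (Fin n) (Fin n) ℂ) :
    (∀ X : Matrix (Fin n) (Fin n) ℂ, (L X * X ^ (m - 1)).trace = 0) ↔
      ∃ B : Matrix (Fin n) (Fin n) ℂ,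
        ∀ X : Matrix (Fin n) (Fin n) ℂ, L X = B * X - X * B :=
  annihilator_of_power_trace_general n m hm L
end

section
/- Let n ≥ 1 and let P be a polynomial with complex coefficients in the n² entries of an n×n matrix such that P(S A S⁻¹) = P(A) for all A ∈ M_n(ℂ) and all S ∈ GL_n(ℂ). Then for any two matrices A, B ∈ M_n(ℂ) with the same characteristic polynomial, P(A) = P(B). (A conjugation-invariant polynomial function on matrices is a symmetric function of the eigenvalues.) -/
open Matrix

section Aux
open Polynomial


lemma my_exists_perm_comp {n : ℕ} (a b : Fin n → ℂ)
    (h : Multiset.map a Finset.univ.val = Multiset.map b Finset.univ.val) :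
    ∃ σ : Equiv.Perm (Fin n), ∀ i, a (σ i) = b i := by
  classical
  have hcard : ∀ y : ℂ, Fintype.card {i // b i = y} = Fintype.card {i // a i = y} := by
    intro y
    have h2 := congrArg (Multiset.count y) h
    rw [Multiset.count_map, Multiset.count_map] at h2
    rw [Fintype.card_subtype, Fintype.card_subtype]
    simp only [Finset.card, Finset.filter_val]
    rw [Multiset.filter_congr (fun x _ => (eq_comm : b x = y ↔ y = b x)),
      Multiset.filter_congr (fun x _ => (eq_comm : a x = y ↔ y = a x))]
    exact h2.symm
  let e : ∀ y : ℂ, {i // b i = y} ≃ {i // a i = y} := fun y => Fintype.equivOfCardEq (hcard y)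
  refine ⟨(Equiv.sigmaFiberEquiv b).symm.trans ((Equiv.sigmaCongrRight e).trans
    (Equiv.sigmaFiberEquiv a)), fun i => ?_⟩
  exact (e (b i) ⟨i, rfl⟩).2

lemma my_charpoly_conj {n : ℕ} (S A : Matrix (Fin n) (Fin n) ℂ) (hS : IsUnit S.det) :
    (S * A * S⁻¹).charpoly = A.charpoly := by
  have h1 : S * S⁻¹ = 1 := mul_nonsing_inv S hS
  have hmap : ∀ M N : Matrix (Fin n) (Fin n) ℂ,
      (C : ℂ →+* ℂ[X]).mapMatrix M * (C : ℂ →+* ℂ[X]).mapMatrix N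
        = (C : ℂ →+* ℂ[X]).mapMatrix (M * N) :=
    fun M N => (_root_.map_mul (C : ℂ →+* ℂ[X]).mapMatrix M N).symm
  have e1 : (C : ℂ →+* ℂ[X]).mapMatrix S * scalar (Fin n) X * (C : ℂ →+* ℂ[X]).mapMatrix S⁻¹
      = scalar (Fin n) X := by
    rw [(scalar_commute (X : ℂ[X]) (fun r' => Commute.all _ _)
      ((C : ℂ →+* ℂ[X]).mapMatrix S)).symm.eq]
    rw [Matrix.mul_assoc, hmap, h1, _root_.map_one, Matrix.mul_one]
  have e2 : (C : ℂ →+* ℂ[X]).mapMatrix S * (C : ℂ →+* ℂ[X]).mapMatrix A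
      * (C : ℂ →+* ℂ[X]).mapMatrix S⁻¹ = (C : ℂ →+* ℂ[X]).mapMatrix (S * A * S⁻¹) := by
    rw [hmap, hmap]
  have key : charmatrix (S * A * S⁻¹) =
      (C : ℂ →+* ℂ[X]).mapMatrix S * charmatrix A * (C : ℂ →+* ℂ[X]).mapMatrix S⁻¹ := by
    unfold charmatrix
    rw [mul_sub, sub_mul, e1, e2]
  unfold Matrix.charpoly
  rw [key, det_mul, det_mul, ← RingHom.map_det, ← RingHom.map_det]
  rw [mul_comm, ← mul_assoc, ← _root_.map_mul, mul_comm S⁻¹.det, ← det_mul, h1, det_one, _root_.map_one, one_mul]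


/-- every complex matrix has an eigenvector -/
lemma my_exists_eigen {m : ℕ} (A : Matrix (Fin (m+1)) (Fin (m+1)) ℂ) :
    ∃ (μ : ℂ) (v : Fin (m+1) → ℂ), v ≠ 0 ∧ A.mulVec v = μ • v := by
  obtain ⟨μ, hμ⟩ := spectrum.nonempty_of_isAlgClosed_of_finiteDimensional ℂ A
  rw [spectrum.mem_iff] at hμ
  have hdet : (algebraMap ℂ (Matrix (Fin (m+1)) (Fin (m+1)) ℂ) μ - A).det = 0 := by
    by_contra h
    exact hμ ((Matrix.isUnit_iff_isUnit_det _).2 (isUnit_iff_ne_zero.2 h))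
  obtain ⟨v, hv0, hv⟩ := (Matrix.exists_mulVec_eq_zero_iff).2 hdet
  refine ⟨μ, v, hv0, ?_⟩
  rw [Algebra.algebraMap_eq_smul_one, Matrix.sub_mulVec, Matrix.smul_mulVec,
    Matrix.one_mulVec, sub_eq_zero] at hv
  rw [← hv]

def myE (n : ℕ) : (Fin 1 ⊕ Fin n) ≃ Fin (n+1) where
  toFun := Sum.elim (fun _ => 0) Fin.succ
  invFun := fun i => Fin.cases (Sum.inl 0) (fun j => Sum.inr j) i
  left_inv := by
    rintro (i | j)
    · simp [Subsingleton.elim i 0]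
    · simp
  right_inv := by
    intro i
    induction i using Fin.cases <;> simp

lemma my_triangularize : ∀ (n : ℕ) (A : Matrix (Fin n) (Fin n) ℂ),
    ∃ S : Matrix (Fin n) (Fin n) ℂ, IsUnit S.det ∧
      ∀ i j : Fin n, j < i → (S * A * S⁻¹) i j = 0 := by
  intro n
  induction n with
  | zero => exact fun A => ⟨1, by simp, fun i j _ => i.elim0⟩
  | succ n ih =>
    intro A
    obtain ⟨μ, v, hv0, hv⟩ := my_exists_eigen A
    obtain ⟨k, hk⟩ : ∃ k, v k ≠ 0 := by
      by_contra h; push_neg at h; exact hv0 (funext h)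
    set M₀ : Matrix (Fin (n+1)) (Fin (n+1)) ℂ := (1 : Matrix _ _ ℂ).updateCol k v with hM₀
    set S₀ : Matrix (Fin (n+1)) (Fin (n+1)) ℂ := M₀.submatrix id (Equiv.swap 0 k) with hS₀def
    have hS₀eq : S₀ = M₀ * ((Equiv.swap (0 : Fin (n+1)) k).toPEquiv.toMatrix) := by
      rw [PEquiv.mul_toMatrix_toPEquiv, Equiv.symm_swap]
    have hM₀det : M₀.det = v k := by
      have : M₀.det = Matrix.cramer (1 : Matrix (Fin (n+1)) (Fin (n+1)) ℂ) v k := by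
        rw [Matrix.cramer_apply]
      rw [this, Matrix.cramer_one]; rfl
    have hS₀det : IsUnit S₀.det := by
      rw [hS₀eq, det_mul]
      refine (isUnit_iff_ne_zero.2 (by rw [hM₀det]; exact hk)).mul ?_
      rw [← Equiv.Perm.permMatrix, Matrix.det_permutation]
      rcases Int.units_eq_one_or (Equiv.Perm.sign (Equiv.swap (0 : Fin (n+1)) k)) with h | h <;>
        simp [h]
    set B : Matrix (Fin (n+1)) (Fin (n+1)) ℂ := S₀⁻¹ * A * S₀ with hBdef
    set e₀ : Fin (n+1) → ℂ := Pi.single 0 1 with he₀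
    have hcol : ∀ i, S₀ i 0 = v i := by
      intro i
      rw [hS₀def, Matrix.submatrix_apply, id, Equiv.swap_apply_left, hM₀, Matrix.updateCol_self]
    have h1 : S₀ *ᵥ e₀ = v := by
      ext i
      rw [Matrix.mulVec_single]
      show S₀ i 0 * 1 = v i
      rw [hcol i, mul_one]
    have hBcol : B *ᵥ e₀ = μ • e₀ := by
      rw [hBdef, ← Matrix.mulVec_mulVec, ← Matrix.mulVec_mulVec, h1, hv, Matrix.mulVec_smul,
        ← h1, Matrix.mulVec_mulVec, nonsing_inv_mul S₀ hS₀det, Matrix.one_mulVec]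
    have hB0 : ∀ i : Fin (n+1), i ≠ 0 → B i 0 = 0 := by
      intro i hi
      have := congrFun hBcol i
      rw [Matrix.mulVec_single] at this
      replace this : B i 0 * 1 = (μ • e₀) i := this
      rw [mul_one] at this
      rw [this, Pi.smul_apply, he₀, Pi.single_eq_of_ne hi, smul_zero]
    set Cm : Matrix (Fin n) (Fin n) ℂ := B.submatrix Fin.succ Fin.succ with hCm
    obtain ⟨T, hT, hTC⟩ := ih Cm
    set e := myE n
    set S' : Matrix (Fin 1 ⊕ Fin n) (Fin 1 ⊕ Fin n) ℂ := fromBlocks 1 0 0 T with hS'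
    have hS'inv : S'⁻¹ = fromBlocks 1 0 0 T⁻¹ := by
      refine inv_eq_right_inv ?_
      rw [hS', fromBlocks_multiply]
      simp [mul_nonsing_inv T hT, fromBlocks_one]
    have hS'det : IsUnit S'.det := by
      rw [hS', det_fromBlocks_zero₂₁, det_one, one_mul]; exact hT
    set B' : Matrix (Fin 1 ⊕ Fin n) (Fin 1 ⊕ Fin n) ℂ := B.submatrix e e with hB'
    set R : Matrix (Fin (n+1)) (Fin (n+1)) ℂ := reindex e e S' with hR
    refine ⟨R * S₀⁻¹, ?_, ?_⟩
    · rw [det_mul]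
      refine IsUnit.mul ?_ (isUnit_nonsing_inv_det S₀ hS₀det)
      rw [hR, det_reindex_self]; exact hS'det
    · have hEinl : ∀ p : Fin 1, e (Sum.inl p) = 0 := fun p => rfl
      have hEinr : ∀ p : Fin n, e (Sum.inr p) = Fin.succ p := fun p => rfl
      have hz : B'.toBlocks₂₁ = 0 := by
        ext p q
        show B (e (Sum.inr p)) (e (Sum.inl q)) = 0
        rw [hEinr, hEinl]
        exact hB0 _ (Fin.succ_ne_zero p)
      have hC' : B'.toBlocks₂₂ = Cm := rfl
      have hG : S' * B' * S'⁻¹ = fromBlocks (B'.toBlocks₁₁) (B'.toBlocks₁₂ * T⁻¹) 0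
          (T * Cm * T⁻¹) := by
        conv_lhs => rw [hS'inv, hS', ← fromBlocks_toBlocks B', hz, hC']
        rw [fromBlocks_multiply, fromBlocks_multiply]
        simp [Matrix.mul_assoc]
      have hB : B = reindex e e B' := by
        rw [hB']
        ext i j
        simp
      have hSAS : R * S₀⁻¹ * A * (R * S₀⁻¹)⁻¹ =
          reindex e e (S' * B' * S'⁻¹) := by
        rw [Matrix.mul_inv_rev, nonsing_inv_nonsing_inv S₀ hS₀det]
        have h2 : reindex e e (S' * B' * S'⁻¹) = R * reindex e e B' * reindex e e S'⁻¹ := by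
          simp only [reindex_apply, hR, Matrix.submatrix_mul_equiv]
        rw [h2, ← hB, hR, ← inv_reindex, ← hR, hBdef]
        simp only [Matrix.mul_assoc]
      intro i j hij
      rw [hSAS, reindex_apply, Matrix.submatrix_apply]
      have hi : i = e (e.symm i) := (e.apply_symm_apply i).symm
      have hj : j = e (e.symm j) := (e.apply_symm_apply j).symm
      rcases hpi : e.symm i with p | p <;> rcases hqj : e.symm j with q | q <;>
          rw [hpi] at hi <;> rw [hqj] at hj
      · rw [hi, hEinl] at hij
        exact absurd hij (Fin.not_lt_zero j).elim
      · rw [hi, hEinl] at hij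
        exact absurd hij (Fin.not_lt_zero j).elim
      · rw [hG]
        rfl
      · rw [hG]
        have hqp : q < p := by
          rw [hi, hj, hEinr, hEinr, Fin.succ_lt_succ_iff] at hij
          exact hij
        exact hTC p q hqp


lemma my_eval_triangular {n : ℕ} (P : MvPolynomial (Fin n × Fin n) ℂ)
    (hP : ∀ (A S : Matrix (Fin n) (Fin n) ℂ), IsUnit S.det →
      MvPolynomial.eval (fun p => (S * A * S⁻¹) p.1 p.2) P =
        MvPolynomial.eval (fun p => A p.1 p.2) P)
    (T : Matrix (Fin n) (Fin n) ℂ) (hT : ∀ i j : Fin n, j < i → T i j = 0) :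
    MvPolynomial.eval (fun p => T p.1 p.2) P =
      MvPolynomial.eval (fun p => (Matrix.diagonal (fun i => T i i)) p.1 p.2) P := by
  classical
  set φ : Fin n × Fin n → ℂ[X] :=
    fun p => C (T p.1 p.2) * X ^ ((p.2 : ℕ) - (p.1 : ℕ)) with hφ
  set Q : ℂ[X] := MvPolynomial.aeval φ P with hQdef
  have heval : ∀ t : ℂ, Polynomial.eval t Q =
      MvPolynomial.eval (fun p : Fin n × Fin n =>
        T p.1 p.2 * t ^ ((p.2 : ℕ) - (p.1 : ℕ))) P := by
    intro t
    rw [hQdef, MvPolynomial.aeval_def, ← Polynomial.coe_evalRingHom,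
      MvPolynomial.eval₂_comp_left (Polynomial.evalRingHom t)]
    have h1 : (Polynomial.evalRingHom t).comp (algebraMap ℂ ℂ[X]) = RingHom.id ℂ := by
      ext c
      simp
    rw [h1, MvPolynomial.eval₂_id]
    have h2 : (⇑(Polynomial.evalRingHom t)) ∘ φ =
        fun p : Fin n × Fin n => T p.1 p.2 * t ^ ((p.2 : ℕ) - (p.1 : ℕ)) := by
      funext p
      simp [hφ]
    rw [h2]
  have htne : ∀ t : ℂ, t ≠ 0 → Polynomial.eval t Q =
      MvPolynomial.eval (fun p : Fin n × Fin n => T p.1 p.2) P := by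
    intro t ht
    rw [heval]
    have hdne : ∀ i : Fin n, (t : ℂ) ^ (i : ℕ) ≠ 0 := fun i => pow_ne_zero _ ht
    set S : Matrix (Fin n) (Fin n) ℂ :=
      Matrix.diagonal (fun i : Fin n => ((t : ℂ) ^ (i : ℕ))⁻¹) with hS
    have hSinv : S⁻¹ = Matrix.diagonal (fun i : Fin n => (t : ℂ) ^ (i : ℕ)) := by
      refine inv_eq_right_inv ?_
      rw [hS, diagonal_mul_diagonal]
      have h3 : (fun i : Fin n => ((t : ℂ) ^ (i : ℕ))⁻¹ * (t : ℂ) ^ (i : ℕ)) =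
          fun _ : Fin n => (1 : ℂ) := funext fun i => inv_mul_cancel₀ (hdne i)
      rw [h3, Matrix.diagonal_one]
    have hSdet : IsUnit S.det := by
      rw [hS, det_diagonal]
      exact isUnit_iff_ne_zero.2 (Finset.prod_ne_zero_iff.2 fun i _ => inv_ne_zero (hdne i))
    have hent : (fun p : Fin n × Fin n => (S * T * S⁻¹) p.1 p.2) =
        fun p : Fin n × Fin n => T p.1 p.2 * t ^ ((p.2 : ℕ) - (p.1 : ℕ)) := by
      funext p
      rw [hSinv, hS, Matrix.mul_diagonal, Matrix.diagonal_mul]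
      rcases le_or_gt ((p.1 : ℕ)) ((p.2 : ℕ)) with h | h
      · have h4 : (t : ℂ) ^ (p.2 : ℕ) = t ^ (p.1 : ℕ) * t ^ ((p.2 : ℕ) - (p.1 : ℕ)) := by
          rw [← pow_add]
          congr 1
          omega
        rw [h4]
        field_simp
      · rw [hT p.1 p.2 (Fin.lt_def.2 h)]
        simp
    rw [← hent, hP T S hSdet]
  have hQC : Q = Polynomial.C (MvPolynomial.eval (fun p : Fin n × Fin n => T p.1 p.2) P) := by
    apply Polynomial.eq_of_infinite_eval_eq
    apply Set.Infinite.mono _ ((Set.finite_singleton (0 : ℂ)).infinite_compl)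
    intro t ht
    simp only [Set.mem_compl_iff, Set.mem_singleton_iff] at ht
    simp only [Set.mem_setOf_eq, Polynomial.eval_C]
    exact htne t ht
  have h0 := congrArg (Polynomial.eval 0) hQC
  rw [heval 0, Polynomial.eval_C] at h0
  rw [← h0]
  have hfin : (fun p : Fin n × Fin n => T p.1 p.2 * (0:ℂ) ^ ((p.2 : ℕ) - (p.1 : ℕ))) =
      fun p : Fin n × Fin n => Matrix.diagonal (fun i => T i i) p.1 p.2 := by
    funext p
    rcases lt_trichotomy ((p.1 : ℕ)) ((p.2 : ℕ)) with h | h | h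
    · rw [Matrix.diagonal_apply_ne _ (fun hc => absurd (congrArg Fin.val hc) (by omega)),
        zero_pow (by omega), mul_zero]
    · have hpq : p.1 = p.2 := Fin.ext h
      rw [hpq, Matrix.diagonal_apply_eq]
      simp [h]
    · rw [hT p.1 p.2 (Fin.lt_def.2 h), Matrix.diagonal_apply_ne _
        (fun hc => absurd (congrArg Fin.val hc) (by omega)), zero_mul]
  rw [hfin]


lemma my_perm_diag {n : ℕ} (P : MvPolynomial (Fin n × Fin n) ℂ)
    (hP : ∀ (A S : Matrix (Fin n) (Fin n) ℂ), IsUnit S.det →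
      MvPolynomial.eval (fun p => (S * A * S⁻¹) p.1 p.2) P =
        MvPolynomial.eval (fun p => A p.1 p.2) P)
    (d : Fin n → ℂ) (σ : Equiv.Perm (Fin n)) :
    MvPolynomial.eval (fun p => (Matrix.diagonal (fun i => d (σ i))) p.1 p.2) P =
      MvPolynomial.eval (fun p => (Matrix.diagonal d) p.1 p.2) P := by
  classical
  set Pm : Matrix (Fin n) (Fin n) ℂ := σ.toPEquiv.toMatrix with hPm
  have hPminv : Pm⁻¹ = (σ.symm).toPEquiv.toMatrix := by
    refine inv_eq_right_inv ?_
    rw [hPm, ← PEquiv.toMatrix_trans, ← Equiv.toPEquiv_trans, Equiv.self_trans_symm,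
      Equiv.toPEquiv_refl, PEquiv.toMatrix_refl]
  have hdet : IsUnit Pm.det := by
    rw [hPm, ← Equiv.Perm.permMatrix, Matrix.det_permutation]
    rcases Int.units_eq_one_or (Equiv.Perm.sign σ) with h | h <;> simp [h]
  have hconj : Pm * Matrix.diagonal d * Pm⁻¹ = Matrix.diagonal (fun i => d (σ i)) := by
    rw [hPminv, hPm, PEquiv.toMatrix_toPEquiv_mul, PEquiv.mul_toMatrix_toPEquiv,
      Equiv.symm_symm, Matrix.submatrix_submatrix]
    ext i j
    rw [Matrix.submatrix_apply]
    by_cases h : i = j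
    · subst h
      simp
    · rw [Matrix.diagonal_apply_ne _ h, Matrix.diagonal_apply_ne]
      simp only [Function.comp_apply, id_eq]
      exact fun hc => h (σ.injective hc)
  rw [← hconj]
  exact hP (Matrix.diagonal d) Pm hdet


end Aux

/-- A conjugation-invariant polynomial function on `n × n` complex matrices
takes equal values on matrices with the same characteristic polynomial. -/
theorem conj_invariant_poly_eq_of_charpoly_eq (n : ℕ) (hn : 1 ≤ n)
    (P : MvPolynomial (Fin n × Fin n) ℂ)
    (hP : ∀ (A S : Matrix (Fin n) (Fin n) ℂ), IsUnit S.det →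
      MvPolynomial.eval (fun p => (S * A * S⁻¹) p.1 p.2) P =
        MvPolynomial.eval (fun p => A p.1 p.2) P)
    (A B : Matrix (Fin n) (Fin n) ℂ) (hAB : A.charpoly = B.charpoly) :
    MvPolynomial.eval (fun p => A p.1 p.2) P =
      MvPolynomial.eval (fun p => B p.1 p.2) P := by
  classical
  obtain ⟨SA, hSAdet, hTA⟩ := my_triangularize n A
  obtain ⟨SB, hSBdet, hTB⟩ := my_triangularize n B
  set TA : Matrix (Fin n) (Fin n) ℂ := SA * A * SA⁻¹ with hTAdef
  set TB : Matrix (Fin n) (Fin n) ℂ := SB * B * SB⁻¹ with hTBdef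
  set a : Fin n → ℂ := fun i => TA i i with ha
  set b : Fin n → ℂ := fun i => TB i i with hb
  have hblA : TA.BlockTriangular id := fun i j h => hTA i j h
  have hblB : TB.BlockTriangular id := fun i j h => hTB i j h
  have hprod : ∏ i : Fin n, (Polynomial.X - Polynomial.C (a i)) =
      ∏ i : Fin n, (Polynomial.X - Polynomial.C (b i)) := by
    rw [← Matrix.charpoly_of_upperTriangular TA hblA,
      ← Matrix.charpoly_of_upperTriangular TB hblB, hTAdef, hTBdef,
      my_charpoly_conj SA A hSAdet, my_charpoly_conj SB B hSBdet, hAB]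
  have hms : Multiset.map a Finset.univ.val = Multiset.map b Finset.univ.val := by
    have h1 : ((Multiset.map a Finset.univ.val).map
          (fun r => Polynomial.X - Polynomial.C r)).prod =
        ((Multiset.map b Finset.univ.val).map
          (fun r => Polynomial.X - Polynomial.C r)).prod := by
      rw [Multiset.map_map, Multiset.map_map, ← Finset.prod_eq_multiset_prod,
        ← Finset.prod_eq_multiset_prod]
      simpa [Function.comp_def] using hprod
    have h2 := congrArg Polynomial.roots h1
    rwa [Polynomial.roots_multiset_prod_X_sub_C, Polynomial.roots_multiset_prod_X_sub_C] at h2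
  obtain ⟨σ, hσ⟩ := my_exists_perm_comp a b hms
  have hdiag : (fun i => a (σ i)) = b := funext hσ
  calc MvPolynomial.eval (fun p => A p.1 p.2) P
      = MvPolynomial.eval (fun p => TA p.1 p.2) P := (hP A SA hSAdet).symm
    _ = MvPolynomial.eval (fun p => (Matrix.diagonal a) p.1 p.2) P :=
        my_eval_triangular P hP TA hTA
    _ = MvPolynomial.eval (fun p => (Matrix.diagonal b) p.1 p.2) P := by
        rw [← hdiag]
        exact (my_perm_diag P hP a σ).symm
    _ = MvPolynomial.eval (fun p => TB p.1 p.2) P :=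
        (my_eval_triangular P hP TB hTB).symm
    _ = MvPolynomial.eval (fun p => B p.1 p.2) P := hP B SB hSBdet
end

section
/- Let n ≥ 1 and let P be a polynomial with complex coefficients in the n² entries of an n×n matrix. Then P(S A S⁻¹) = P(A) for all A ∈ M_n(ℂ) and all S ∈ GL_n(ℂ) if and only if there exists a polynomial Q ∈ ℂ[y_0, …, y_{n−1}] such that P(A) = Q(c_0(A), c_1(A), …, c_{n−1}(A)) for all A ∈ M_n(ℂ), where c_i(A) denotes the coefficient of t^i in the characteristic polynomial det(t·I_n − A). (Conjugation-invariant polynomial functions on matrices are exactly the polynomials in the coefficients of the characteristic polynomial, i.e., the symmetric functions of the eigenvalues.) -/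
/-!
Restricting a conjugation-invariant `P` to diagonal matrices gives a polynomial in the diagonal
entries that is symmetric (conjugate by permutation matrices), hence, by the fundamental theorem
of symmetric polynomials and Vieta's formulas, a polynomial `Q` in the coefficients of
`∏ (X - μᵢ)`. So `P(A) = Q(c(A))` whenever `A` is diagonalizable, in particular whenever its
eigenvalues are distinct. The discriminant of the eigenvalues is itself a polynomial `D` in the
entries of `A`, not identically zero, and the identity `(P - Q ∘ c) * D = 0` of polynomial
functions forces `P = Q ∘ c`.
-/

open Matrix Polynomial

section Symmetric

open MvPolynomial

variable {R : Type*} [CommRing R]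

theorem MvPolynomial.eval_esymm_eq_coeff_prod_X_sub_C {σ : Type*} [Fintype σ] (μ : σ → R) {k : ℕ}
    (hk : k ≤ Fintype.card σ) :
    eval μ (esymm σ R k) =
      (-1) ^ k * (∏ j, (Polynomial.X - Polynomial.C (μ j))).coeff (Fintype.card σ - k) := by
  have hcard : Multiset.card (Finset.univ.val.map μ) = Fintype.card σ := by simp
  have hprod : ∏ j, (Polynomial.X - Polynomial.C (μ j)) =
      ((Finset.univ.val.map μ).map fun t => Polynomial.X - Polynomial.C t).prod := by
    rw [Multiset.map_map]; rfl
  rw [hprod, Multiset.prod_X_sub_C_coeff _ (hcard ▸ Nat.sub_le _ _), hcard, Nat.sub_sub_self hk,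
    ← mul_assoc, ← pow_add, Even.neg_one_pow ⟨k, rfl⟩, one_mul, ← aeval_eq_eval,
    aeval_esymm_eq_multiset_esymm]

theorem MvPolynomial.IsSymmetric.exists_eval_eq_eval_coeff_prod_X_sub_C {n : ℕ}
    {f : MvPolynomial (Fin n) R} (hf : f.IsSymmetric) :
    ∃ Q : MvPolynomial (Fin n) R, ∀ μ : Fin n → R,
      eval μ f = eval (fun i : Fin n => (∏ j, (Polynomial.X - Polynomial.C (μ j))).coeff i) Q := by
  -- Vieta: `eₖ(μ) = (-1)ᵏ cₙ₋ₖ`, and for `k = i + 1` the index `n - k` is `i.rev`.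
  obtain ⟨g, hg⟩ := esymmAlgHom_surjective R (Fintype.card_fin n).le ⟨f, hf⟩
  have hfg : f = bind₁ (fun i : Fin n => esymm (Fin n) R (i + 1)) g :=
    (congrArg Subtype.val hg).symm.trans (esymmAlgHom_apply g)
  refine ⟨bind₁ (fun i : Fin n => MvPolynomial.C ((-1) ^ (i + 1 : ℕ)) * MvPolynomial.X i.rev) g,
    fun μ => ?_⟩
  rw [hfg]
  refine (eval₂Hom_bind₁ _ _ _ _).trans (.trans ?_ (eval₂Hom_bind₁ _ _ _ _).symm)
  congr 2 with i
  have hi : Fintype.card (Fin n) - (i + 1 : ℕ) = i.rev := by simp [Fin.val_rev]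
  change eval μ _ = eval _ _
  rw [map_mul, eval_C, eval_X, eval_esymm_eq_coeff_prod_X_sub_C μ (by simp), hi]

variable (σ : Type*) [Fintype σ] [DecidableEq σ]

/-- `(-1) ^ (n(n-1)/2)` times the discriminant of `∏ i, (T - X i)`, where `n = card σ`. -/
noncomputable def MvPolynomial.discrProd : MvPolynomial σ R :=
  ∏ i, ∏ j, if i = j then 1 else (X i - X j)

theorem MvPolynomial.isSymmetric_discrProd : (discrProd σ : MvPolynomial σ R).IsSymmetric := by
  intro e
  rw [discrProd, map_prod]
  refine Fintype.prod_equiv e _ _ fun i => ?_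
  rw [map_prod]
  refine Fintype.prod_equiv e _ _ fun j => ?_
  split_ifs with h <;> simp_all

variable {σ} in
theorem MvPolynomial.eval_discrProd_ne_zero_iff [IsDomain R] (μ : σ → R) :
    eval μ (discrProd σ) ≠ 0 ↔ Function.Injective μ := by
  simp only [discrProd, map_prod, apply_ite (eval μ), map_one, map_sub, eval_X,
    Finset.prod_ne_zero_iff, Finset.mem_univ, forall_const]
  refine ⟨fun h i j hij => ?_, fun h i j => ?_⟩
  · by_contra hne
    simpa [hne, hij] using h i j
  · split_ifs with hij
    · exact one_ne_zero
    · exact sub_ne_zero.mpr (h.ne hij)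

end Symmetric

section Matrix

variable {R : Type*} [CommRing R] {m : Type*} [Fintype m] [DecidableEq m]

theorem Matrix.charpoly_conj_of_isUnit_det (A S : Matrix m m R) (hS : IsUnit S.det) :
    (S * A * S⁻¹).charpoly = A.charpoly := by
  rw [charpoly_mul_comm, ← Matrix.mul_assoc, nonsing_inv_mul _ hS, Matrix.one_mul]

theorem Matrix.permMatrix_mul_diagonal_mul_inv (σ : Equiv.Perm m) (d : m → R) :
    σ.permMatrix R * diagonal d * (σ.permMatrix R)⁻¹ = diagonal (d ∘ σ) := by
  have hinv : (σ.permMatrix R)⁻¹ = σ⁻¹.permMatrix R :=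
    inv_eq_right_inv (by rw [← permMatrix_mul, inv_mul_cancel, permMatrix_one])
  rw [hinv, Equiv.Perm.permMatrix, Equiv.Perm.permMatrix, PEquiv.toMatrix_toPEquiv_mul,
    PEquiv.mul_toMatrix_toPEquiv, submatrix_submatrix, Function.comp_id, Function.id_comp,
    Equiv.Perm.inv_def, Equiv.symm_symm, submatrix_diagonal_equiv]

theorem Matrix.isUnit_det_permMatrix (σ : Equiv.Perm m) : IsUnit (σ.permMatrix R).det := by
  rw [det_permutation]
  exact σ.sign.isUnit.map (Int.castRingHom R)

end Matrix

section Eigenvalues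

variable {K : Type*} [Field K] {m : Type*} [Fintype m] [DecidableEq m]

theorem Matrix.exists_conj_diagonal_of_charpoly_eq_prod (A : Matrix m m K) {μ : m → K}
    (hA : A.charpoly = ∏ i, (X - C (μ i))) (hμ : Function.Injective μ) :
    ∃ S : Matrix m m K, IsUnit S.det ∧ A = S * diagonal μ * S⁻¹ := by
  have hev : ∀ i, Module.End.HasEigenvalue (toLin' A) (μ i) := by
    intro i
    rw [Module.End.hasEigenvalue_iff_mem_spectrum, spectrum_toLin',
      mem_spectrum_iff_isRoot_charpoly, hA, IsRoot, eval_prod]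
    exact Finset.prod_eq_zero (Finset.mem_univ i) (by simp)
  choose v hv using fun i => (hev i).exists_hasEigenvector
  have hS : IsUnit (of v)ᵀ.det := by
    rw [← isUnit_iff_isUnit_det, ← linearIndependent_cols_iff_isUnit]
    exact Module.End.eigenvectors_linearIndependent' _ μ hμ v hv
  have hAS : A * (of v)ᵀ = (of v)ᵀ * diagonal μ := by
    ext i j
    rw [mul_diagonal]
    simpa [mul_comm, toLin'_apply, mulVec, dotProduct, Matrix.mul_apply] using
      congrFun (hv j).apply_eq_smul i
  refine ⟨(of v)ᵀ, hS, ?_⟩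
  rw [← hAS, Matrix.mul_assoc, mul_nonsing_inv _ hS, Matrix.mul_one]

theorem Matrix.exists_charpoly_eq_prod_X_sub_C [IsAlgClosed K] (A : Matrix m m K) :
    ∃ μ : m → K, A.charpoly = ∏ i, (X - C (μ i)) := by
  set l := A.charpoly.roots.toList
  have hl : l.length = Fintype.card m := by
    rw [Multiset.length_toList, splits_iff_card_roots.mp (IsAlgClosed.splits _),
      charpoly_natDegree_eq_dim]
  let e : m ≃ Fin l.length := (Fintype.equivFin m).trans (finCongr hl.symm)
  refine ⟨fun i => l[(e i : ℕ)], ?_⟩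
  calc A.charpoly = (A.charpoly.roots.map fun a => X - C a).prod :=
        (IsAlgClosed.splits _).eq_prod_roots_of_monic A.charpoly_monic
    _ = ∏ i : Fin l.length, (X - C l[(i : ℕ)]) := by
        rw [Fin.prod_univ_fun_getElem l fun a => X - C a, ← Multiset.prod_coe, ← Multiset.map_coe,
          Multiset.coe_toList]
    _ = ∏ i, (X - C l[(e i : ℕ)]) := (Fintype.prod_equiv e _ _ fun i => rfl).symm

end Eigenvalues

section PolynomialFunctions

open MvPolynomial

variable {R : Type*} [CommRing R] {m : Type*} [DecidableEq m]

noncomputable def MvPolynomial.restrictDiagonal (P : MvPolynomial (m × m) R) : MvPolynomial m R :=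
  bind₁ (fun q : m × m => diagonal X q.1 q.2) P

theorem MvPolynomial.eval_restrictDiagonal (P : MvPolynomial (m × m) R) (x : m → R) :
    eval x (restrictDiagonal P) = eval (fun q => diagonal x q.1 q.2) P := by
  refine (eval₂Hom_bind₁ _ _ _ _).trans (congrArg (eval · P) ?_)
  funext q
  by_cases h : q.1 = q.2 <;> simp [h]

variable [Fintype m]

variable (m) in
noncomputable def MvPolynomial.bindCharpolyCoeffs {n : ℕ}
    (Q : MvPolynomial (Fin n) R) : MvPolynomial (m × m) R :=
  bind₁ (fun i : Fin n => (mvPolynomialX m m R).charpoly.coeff i) Q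

theorem MvPolynomial.eval_bindCharpolyCoeffs {n : ℕ} (Q : MvPolynomial (Fin n) R)
    (A : Matrix m m R) :
    eval (fun p => A p.1 p.2) (bindCharpolyCoeffs m Q) =
      eval (fun i : Fin n => A.charpoly.coeff i) Q := by
  refine (eval₂Hom_bind₁ _ _ _ _).trans (congrArg (eval · Q) ?_)
  funext i
  calc eval _ ((mvPolynomialX m m R).charpoly.coeff i)
      = ((mvPolynomialX m m R).charpoly.map (eval fun p => A p.1 p.2)).coeff i :=
        (Polynomial.coeff_map _ _).symm
    _ = A.charpoly.coeff i := by
        rw [← charpoly_map, ← RingHom.mapMatrix_apply, mvPolynomialX_mapMatrix_eval]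

def MvPolynomial.IsConjInvariant (P : MvPolynomial (m × m) R) : Prop :=
  ∀ A S : Matrix m m R, IsUnit S.det →
    eval (fun p => (S * A * S⁻¹) p.1 p.2) P = eval (fun p => A p.1 p.2) P

theorem MvPolynomial.IsConjInvariant.isSymmetric_restrictDiagonal [Infinite R] [IsDomain R]
    {P : MvPolynomial (m × m) R} (hP : P.IsConjInvariant) : (restrictDiagonal P).IsSymmetric := by
  intro σ
  refine MvPolynomial.funext fun x => ?_
  rw [eval_rename, eval_restrictDiagonal, eval_restrictDiagonal,
    ← permMatrix_mul_diagonal_mul_inv]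
  exact hP _ _ (isUnit_det_permMatrix σ)

end PolynomialFunctions

section Density

open MvPolynomial

variable {K : Type*} [Field K] [IsAlgClosed K] {n : ℕ}

theorem MvPolynomial.eq_of_eval_eq_of_injective_eigenvalues
    {P P' : MvPolynomial (Fin n × Fin n) K}
    (h : ∀ (A : Matrix (Fin n) (Fin n) K) (μ : Fin n → K),
      A.charpoly = ∏ i, (Polynomial.X - Polynomial.C (μ i)) → Function.Injective μ →
        eval (fun p => A p.1 p.2) P = eval (fun p => A p.1 p.2) P') :
    P = P' := by
  obtain ⟨Q, hQ⟩ := (isSymmetric_discrProd (Fin n) (R := K)).exists_eval_eq_eval_coeff_prod_X_sub_C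
  set D := bindCharpolyCoeffs (Fin n) Q
  have hD : ∀ (A : Matrix (Fin n) (Fin n) K) (μ : Fin n → K),
      A.charpoly = ∏ i, (Polynomial.X - Polynomial.C (μ i)) →
        eval (fun p => A p.1 p.2) D = eval μ (discrProd (Fin n)) := by
    intro A μ hA
    rw [eval_bindCharpolyCoeffs, hA, hQ]
  have hD0 : D ≠ 0 := by
    obtain ⟨v, hv⟩ : ∃ v : Fin n → K, Function.Injective v :=
      ⟨_, (Infinite.natEmbedding K).injective.comp Fin.val_injective⟩
    intro h0
    have := hD (diagonal v) v (charpoly_diagonal v)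
    rw [h0, map_zero] at this
    exact (eval_discrProd_ne_zero_iff v).mpr hv this.symm
  have hPD : (P - P') * D = 0 := by
    refine MvPolynomial.funext fun x => ?_
    obtain ⟨A, rfl⟩ : ∃ A : Matrix (Fin n) (Fin n) K, (fun p => A p.1 p.2) = x :=
      ⟨of fun i j => x (i, j), rfl⟩
    obtain ⟨μ, hA⟩ := exists_charpoly_eq_prod_X_sub_C A
    rw [map_mul, map_sub, map_zero]
    by_cases hμ : Function.Injective μ
    · rw [sub_eq_zero.mpr (h _ μ hA hμ), zero_mul]
    · rw [hD _ μ hA, not_not.mp (mt (eval_discrProd_ne_zero_iff μ).mp hμ), mul_zero]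
  exact sub_eq_zero.mp ((mul_eq_zero.mp hPD).resolve_right hD0)

end Density

theorem conj_invariant_poly_iff_poly_in_charpoly_coeffs_general (n : ℕ)
    (P : MvPolynomial (Fin n × Fin n) ℂ) :
    (∀ (A S : Matrix (Fin n) (Fin n) ℂ), IsUnit S.det →
      MvPolynomial.eval (fun p => (S * A * S⁻¹) p.1 p.2) P =
        MvPolynomial.eval (fun p => A p.1 p.2) P) ↔
      ∃ Q : MvPolynomial (Fin n) ℂ, ∀ A : Matrix (Fin n) (Fin n) ℂ,
        MvPolynomial.eval (fun p => A p.1 p.2) P =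
          MvPolynomial.eval (fun i : Fin n => A.charpoly.coeff (i : ℕ)) Q := by
  refine ⟨fun hP => ?_, fun ⟨Q, hQ⟩ A S hS => by rw [hQ, hQ, charpoly_conj_of_isUnit_det A S hS]⟩
  obtain ⟨Q, hQ⟩ := (MvPolynomial.IsConjInvariant.isSymmetric_restrictDiagonal hP)
    |>.exists_eval_eq_eval_coeff_prod_X_sub_C
  have hPQ : P = MvPolynomial.bindCharpolyCoeffs (Fin n) Q := by
    refine MvPolynomial.eq_of_eval_eq_of_injective_eigenvalues fun A μ hA hμ => ?_
    obtain ⟨S, hS, rfl⟩ := exists_conj_diagonal_of_charpoly_eq_prod A hA hμ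
    rw [hP _ _ hS, MvPolynomial.eval_bindCharpolyCoeffs, hA, ← hQ,
      MvPolynomial.eval_restrictDiagonal]
  exact ⟨Q, fun A => by rw [hPQ, MvPolynomial.eval_bindCharpolyCoeffs]⟩

/-- Conjugation-invariant polynomial functions on `n × n` complex matrices
are exactly the polynomials in the coefficients of the characteristic
polynomial. -/
theorem conj_invariant_poly_iff_poly_in_charpoly_coeffs (n : ℕ) (hn : 1 ≤ n)
    (P : MvPolynomial (Fin n × Fin n) ℂ) :
    (∀ (A S : Matrix (Fin n) (Fin n) ℂ), IsUnit S.det →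
      MvPolynomial.eval (fun p => (S * A * S⁻¹) p.1 p.2) P =
        MvPolynomial.eval (fun p => A p.1 p.2) P) ↔
      ∃ Q : MvPolynomial (Fin n) ℂ, ∀ A : Matrix (Fin n) (Fin n) ℂ,
        MvPolynomial.eval (fun p => A p.1 p.2) P =
          MvPolynomial.eval (fun i : Fin n => A.charpoly.coeff (i : ℕ)) Q :=
  conj_invariant_poly_iff_poly_in_charpoly_coeffs_general n P
end

section
/- For every integer a ≥ 1 with a ∉ {2, 3, 4, 7, 8, 12}, there exists a self-conjugate partition μ of a with at most max(⌊√a⌋ + 3, 12) parts such that the number of cells of μ lying strictly above the main diagonal is even. -/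
open Finset

namespace SelfConj

lemma gap {d : ℕ} {v : ℕ → ℕ} (hv : ∀ i j, i < j → j < d → v j < v i) :
    ∀ i j, i ≤ j → j < d → v j + (j - i) ≤ v i := by
  have key : ∀ n i, i + n < d → v (i + n) + n ≤ v i := by
    intro n
    induction n with
    | zero => intro i _; simp
    | succ n ih =>
      intro i h
      have h1 : v (i + n + 1) < v (i + n) := hv _ _ (Nat.lt_succ_self _) (by omega)
      have h2 := ih i (by omega)
      have h3 : i + (n + 1) = i + n + 1 := by omega
      rw [h3]; omega
  intro i j hij hj
  have h4 := key (j - i) i (by omega)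
  have h5 : i + (j - i) = j := by omega
  rw [h5] at h4
  omega

def hookDiagram (d : ℕ) (v : ℕ → ℕ) (hv : ∀ i j, i < j → j < d → v j < v i) : YoungDiagram where
  cells := ((range (v 0 + 1)) ×ˢ (range (v 0 + 1))).filter
    (fun c => min c.1 c.2 < d ∧ max c.1 c.2 ≤ min c.1 c.2 + v (min c.1 c.2))
  isLowerSet := by
    rintro ⟨i, j⟩ ⟨i', j'⟩ ⟨hi, hj⟩ h
    simp only [Finset.coe_filter, Set.mem_setOf_eq, Finset.mem_product, Finset.mem_range] at h ⊢
    obtain ⟨⟨hbi, hbj⟩, hmin, hmax⟩ := h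
    have hmm : min i' j' ≤ min i j := by omega
    have hg := gap hv (min i' j') (min i j) hmm hmin
    refine ⟨⟨by omega, by omega⟩, by omega, by omega⟩

variable {d : ℕ} {v : ℕ → ℕ} {hv : ∀ i j, i < j → j < d → v j < v i}

lemma mem_hookDiagram {i j : ℕ} :
    (i, j) ∈ hookDiagram d v hv ↔ min i j < d ∧ max i j ≤ min i j + v (min i j) := by
  rw [← YoungDiagram.mem_cells]
  simp only [hookDiagram, Finset.mem_filter, Finset.mem_product, Finset.mem_range]
  constructor
  · rintro ⟨-, h⟩; exact h
  · rintro ⟨h1, h2⟩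
    have hg := gap hv 0 (min i j) (Nat.zero_le _) h1
    exact ⟨⟨by omega, by omega⟩, h1, h2⟩

lemma transpose_hookDiagram : (hookDiagram d v hv).transpose = hookDiagram d v hv := by
  ext ⟨i, j⟩
  rw [YoungDiagram.mem_cells, YoungDiagram.mem_cells, YoungDiagram.mem_transpose]
  show (j, i) ∈ hookDiagram d v hv ↔ (i, j) ∈ hookDiagram d v hv
  rw [mem_hookDiagram, mem_hookDiagram, min_comm, max_comm]

def hook (v : ℕ → ℕ) (i : ℕ) : Finset (ℕ × ℕ) :=
  ((Icc i (i + v i)).image fun j => (i, j)) ∪ ((Icc i (i + v i)).image fun j => (j, i))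

lemma mem_hook {i : ℕ} {c : ℕ × ℕ} :
    c ∈ hook v i ↔ (c.1 = i ∧ i ≤ c.2 ∧ c.2 ≤ i + v i) ∨ (c.2 = i ∧ i ≤ c.1 ∧ c.1 ≤ i + v i) := by
  obtain ⟨x, y⟩ := c
  simp only [hook, Finset.mem_union, Finset.mem_image, Finset.mem_Icc, Prod.mk.injEq]
  constructor
  · rintro (⟨j, hj, rfl, rfl⟩ | ⟨j, hj, rfl, rfl⟩) <;> simp <;> omega
  · rintro (⟨h1, h2, h3⟩ | ⟨h1, h2, h3⟩)
    · exact Or.inl ⟨y, ⟨h2, h3⟩, h1.symm, rfl⟩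
    · exact Or.inr ⟨x, ⟨h2, h3⟩, rfl, h1.symm⟩

lemma cells_eq : (hookDiagram d v hv).cells = (range d).biUnion (hook v) := by
  ext ⟨x, y⟩
  rw [YoungDiagram.mem_cells, mem_hookDiagram, Finset.mem_biUnion]
  constructor
  · rintro ⟨h1, h2⟩
    refine ⟨min x y, Finset.mem_range.2 h1, mem_hook.2 ?_⟩
    rcases le_total x y with h | h
    · rw [min_eq_left h] at *
      rw [max_eq_right h] at h2
      exact Or.inl ⟨rfl, h, h2⟩
    · rw [min_eq_right h] at *
      rw [max_eq_left h] at h2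
      exact Or.inr ⟨rfl, h, h2⟩
  · rintro ⟨i, hi, hc⟩
    rw [Finset.mem_range] at hi
    rcases mem_hook.1 hc with ⟨h1, h2, h3⟩ | ⟨h1, h2, h3⟩ <;> simp only at h1 h2 h3 <;>
        subst h1
    · have hm : min x y = x := by omega
      rw [hm]
      exact ⟨by omega, by omega⟩
    · have hm : min x y = y := by omega
      rw [hm]
      exact ⟨by omega, by omega⟩

lemma min_of_mem_hook {i : ℕ} {c : ℕ × ℕ} (h : c ∈ hook v i) : min c.1 c.2 = i := by
  rcases mem_hook.1 h with ⟨h1, h2, h3⟩ | ⟨h1, h2, h3⟩ <;> omega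

lemma card_hook (i : ℕ) : (hook v i).card = 2 * v i + 1 := by
  have hinter : ((Icc i (i + v i)).image fun j => (i, j)) ∩ ((Icc i (i + v i)).image fun j => (j, i))
      = {(i, i)} := by
    ext ⟨x, y⟩
    simp only [Finset.mem_inter, Finset.mem_image, Finset.mem_Icc, Finset.mem_singleton,
      Prod.mk.injEq]
    constructor
    · rintro ⟨⟨j, ⟨h1, h2⟩, h3, h4⟩, ⟨j', ⟨h1', h2'⟩, h3', h4'⟩⟩
      constructor <;> omega
    · rintro ⟨h1, h2⟩
      exact ⟨⟨i, ⟨by omega, by omega⟩, h1.symm, h2.symm⟩, ⟨i, ⟨by omega, by omega⟩, h1.symm, h2.symm⟩⟩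
  have h1 : ((Icc i (i + v i)).image fun j => (i, j)).card = v i + 1 := by
    rw [Finset.card_image_of_injective _ (fun a b h => by simpa using h), Nat.card_Icc]
    omega
  have h2 : ((Icc i (i + v i)).image fun j => (j, i)).card = v i + 1 := by
    rw [Finset.card_image_of_injective _ (fun a b h => by simpa using h), Nat.card_Icc]
    omega
  have h3 := Finset.card_union_add_card_inter ((Icc i (i + v i)).image fun j => (i, j))
    ((Icc i (i + v i)).image fun j => (j, i))
  rw [hinter, h1, h2] at h3
  simp only [Finset.card_singleton] at h3
  unfold hook
  omega

lemma card_hookDiagram : (hookDiagram d v hv).card = ∑ i ∈ range d, (2 * v i + 1) := by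
  show (hookDiagram d v hv).cells.card = _
  rw [cells_eq, Finset.card_biUnion]
  · exact Finset.sum_congr rfl fun i _ => card_hook i
  · intro i hi j hj hij
    refine Finset.disjoint_left.2 fun c hci hcj => ?_
    have e1 := min_of_mem_hook hci
    have e2 := min_of_mem_hook hcj
    exact hij (by omega)

lemma filter_cells_eq :
    ((hookDiagram d v hv).cells.filter (fun c => c.1 < c.2)) =
      (range d).biUnion (fun i => (Ioc i (i + v i)).image fun j => (i, j)) := by
  rw [cells_eq]
  ext ⟨x, y⟩
  simp only [Finset.mem_filter, Finset.mem_biUnion, Finset.mem_image, Finset.mem_Ioc,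
    Finset.mem_range, Prod.mk.injEq]
  constructor
  · rintro ⟨⟨i, hi, hc⟩, hxy⟩
    rcases mem_hook.1 hc with ⟨h1, h2, h3⟩ | ⟨h1, h2, h3⟩ <;> simp only at h1 h2 h3 hxy
    · exact ⟨i, hi, y, ⟨by omega, h3⟩, h1.symm, rfl⟩
    · omega
  · rintro ⟨i, hi, j, ⟨h1, h2⟩, h3, h4⟩
    subst h3; subst h4
    exact ⟨⟨i, hi, mem_hook.2 (Or.inl ⟨rfl, by omega, h2⟩)⟩, by omega⟩

lemma card_filter_hookDiagram :
    ((hookDiagram d v hv).cells.filter (fun c => c.1 < c.2)).card = ∑ i ∈ range d, v i := by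
  rw [filter_cells_eq, Finset.card_biUnion]
  · refine Finset.sum_congr rfl fun i _ => ?_
    rw [Finset.card_image_of_injective _ (fun a b h => by simpa using h), Nat.card_Ioc]
    omega
  · intro i hi j hj hij
    refine Finset.disjoint_left.2 fun c hci hcj => ?_
    simp only [Finset.mem_image, Finset.mem_Ioc] at hci hcj
    obtain ⟨a, -, ha⟩ := hci
    obtain ⟨b, -, hb⟩ := hcj
    rw [← ha] at hb
    injection hb with hb1 hb2
    exact hij hb1.symm

lemma colLen_hookDiagram (hd : 0 < d) : (hookDiagram d v hv).colLen 0 = v 0 + 1 := by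
  have hmem : ∀ i : ℕ, (i, 0) ∈ hookDiagram d v hv ↔ i ≤ v 0 := by
    intro i
    rw [mem_hookDiagram]
    constructor
    · rintro ⟨h1, h2⟩
      have hg := gap hv 0 (min i 0) (Nat.zero_le _) h1
      omega
    · intro h
      have hm : min i 0 = 0 := by omega
      rw [hm]
      exact ⟨hd, by omega⟩
  have h1 : v 0 < (hookDiagram d v hv).colLen 0 :=
    YoungDiagram.mem_iff_lt_colLen.1 ((hmem (v 0)).2 le_rfl)
  have h2 : ¬ (v 0 + 1 < (hookDiagram d v hv).colLen 0) := by
    intro h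
    have := (hmem (v 0 + 1)).1 (YoungDiagram.mem_iff_lt_colLen.2 h)
    omega
  omega

lemma key' (d : ℕ) (v : ℕ → ℕ) (hd : 0 < d) (hv : ∀ i j, i < j → j < d → v j < v i) :
    ∃ μ : YoungDiagram, μ.card = ∑ i ∈ range d, (2 * v i + 1) ∧ μ.transpose = μ ∧
      μ.colLen 0 = v 0 + 1 ∧
      (μ.cells.filter (fun c => c.1 < c.2)).card = ∑ i ∈ range d, v i :=
  ⟨hookDiagram d v hv, card_hookDiagram, transpose_hookDiagram,
    colLen_hookDiagram hd, card_filter_hookDiagram⟩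


lemma stair (k : ℕ) : ∀ d, d ≤ k → ∑ i ∈ range d, (2 * (k - 1 - i) + 1) = d * (2 * k - d) := by
  intro d
  induction d with
  | zero => simp
  | succ d ih =>
    intro h
    rw [Finset.sum_range_succ, ih (by omega)]
    have h1 : d ≤ k - 1 := by omega
    zify [show d ≤ 2*k by omega, show d + 1 ≤ 2*k by omega, h1, show (1:ℕ) ≤ k by omega]
    ring

lemma stair2 (k : ℕ) : ∀ d, d ≤ k → 2 * ∑ i ∈ range d, (k - 1 - i) = d * (2 * k - d - 1) := by
  intro d
  induction d with
  | zero => simp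
  | succ d ih =>
    intro h
    rw [Finset.sum_range_succ, Nat.mul_add, ih (by omega)]
    have h1 : d ≤ k - 1 := by omega
    zify [h1, show d ≤ 2*k by omega, show d + 1 ≤ 2*k by omega,
      show (1:ℕ) ≤ 2*k - d by omega, show (1:ℕ) ≤ 2*k - (d+1) by omega,
      show (1:ℕ) ≤ k by omega]
    ring

lemma greedy (c : ℕ) : ∀ d q, q ≤ c * d → ∑ i ∈ range d, min c (q - c * i) = q := by
  intro d
  induction d with
  | zero => intro q h; simp at h ⊢; omega
  | succ d ih =>
    intro q h
    rw [Finset.sum_range_succ']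
    have hshift : ∀ i, min c (q - c * (i + 1)) = min c ((q - c) - c * i) := by
      intro i
      have h1 : c * (i + 1) = c * i + c := by ring
      rw [h1]
      omega
    rw [Finset.sum_congr rfl fun i _ => hshift i]
    have h2 : c * (d + 1) = c * d + c := by ring
    rw [ih (q - c) (by omega)]
    simp only [Nat.mul_zero, Nat.sub_zero]
    omega

lemma caplem (k c q cap : ℕ) (hk4 : 4 ≤ k) (hc3 : c ≤ 3)
    (hcap : max 3 (12 - k) = cap) (hq4 : q ≤ k + 4) : q ≤ cap * (k - c) := by
  rcases le_or_gt k 8 with h | h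
  · have hc12 : cap = 12 - k := by omega
    subst hc12
    interval_cases k <;> omega
  · have hcap' : cap = 3 := by omega
    subst hcap'
    omega

lemma par (kk k r c cc d q S N : ℕ) (h1 : 2 ∣ kk + k) (h2 : (3*kk + k + 3*r) % 4 = c)
    (h3 : k - c = d) (h4 : c ≤ 3) (h5 : c ≤ k) (h6 : 2*S = N) (h7 : N + d + cc = kk)
    (h8 : 2*q = r + cc) : (S + q) % 2 = 0 := by omega


lemma sumcard (a k r c cc cap q d : ℕ) (hra : a = k * k + r) (hc3 : c ≤ 3)
    (hck : c ≤ k) (hd : k - c = d) (hdk : d ≤ k) (hcc : c * c = cc)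
    (hq2 : 2 * q = r + cc) (hqcap : q ≤ cap * d) :
    ∑ i ∈ range d, (2 * ((k - 1 - i) + min cap (q - cap * i)) + 1) = a := by
  have hsum1 : ∑ i ∈ range d, (2 * ((k - 1 - i) + min cap (q - cap * i)) + 1) =
      (∑ i ∈ range d, (2 * (k - 1 - i) + 1)) + 2 * ∑ i ∈ range d, min cap (q - cap * i) := by
    rw [Finset.mul_sum, ← Finset.sum_add_distrib]
    exact Finset.sum_congr rfl fun i _ => by ring
  rw [hsum1, stair k d hdk, greedy cap d q hqcap]
  have h2kd : 2 * k - d = k + c := by omega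
  rw [h2kd]
  have hmul : d * (k + c) + cc = k * k := by
    rw [← hd, ← hcc]
    zify [hck]
    ring
  omega

lemma sumeven (k r c cc cap q d : ℕ) (hd1 : 0 < d) (hkk2 : 2 ∣ k * k + k)
    (hc : (3 * (k * k) + k + 3 * r) % 4 = c) (hc3 : c ≤ 3)
    (hck : c ≤ k) (hd : k - c = d) (hdk : d ≤ k) (hcc : c * c = cc)
    (hq2 : 2 * q = r + cc) (hqcap : q ≤ cap * d) :
    Even (∑ i ∈ range d, ((k - 1 - i) + min cap (q - cap * i))) := by
  rw [Finset.sum_add_distrib, greedy cap d q hqcap, Nat.even_iff]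
  have hst2 := stair2 k d hdk
  have h2kd1 : 2 * k - d - 1 = k + c - 1 := by omega
  rw [h2kd1] at hst2
  have hmul2 : d * (k + c) = d * (k + c - 1) + d := by
    obtain ⟨e, he⟩ : ∃ e, k + c = e + 1 := ⟨k + c - 1, by omega⟩
    rw [he, Nat.add_sub_cancel]
    ring
  have hmul : d * (k + c) + cc = k * k := by
    rw [← hd, ← hcc]
    zify [hck]
    ring
  exact par (k * k) k r c cc d q _ (d * (k + c - 1)) hkk2 hc hd hc3 hck hst2
    (by omega) hq2

lemma strictanti (k cap q d : ℕ) (hdk : d ≤ k) : ∀ i j, i < j → j < d →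
    (fun i => (k - 1 - i) + min cap (q - cap * i)) j <
      (fun i => (k - 1 - i) + min cap (q - cap * i)) i := by
  intro i j hij hjd
  have hmono : cap * i ≤ cap * j := Nat.mul_le_mul_left cap (le_of_lt hij)
  simp only
  omega

set_option maxHeartbeats 1000000 in
lemma main16 (a : ℕ) (h16 : 16 ≤ a) :
    ∃ μ : YoungDiagram, μ.card = a ∧ μ.transpose = μ ∧
      μ.colLen 0 ≤ max (Nat.sqrt a + 3) 12 ∧
      Even ((μ.cells.filter (fun c => c.1 < c.2)).card) := by
  obtain ⟨k, hksq⟩ : ∃ k, Nat.sqrt a = k := ⟨_, rfl⟩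
  have hk1 : k * k ≤ a := by
    rw [← hksq]; have h := Nat.sqrt_le' a; rwa [pow_two] at h
  have hk2 : a < (k + 1) * (k + 1) := by
    rw [← hksq]; have h := Nat.lt_succ_sqrt' a; rwa [pow_two] at h
  have hk4 : 4 ≤ k := by rw [← hksq]; exact Nat.le_sqrt.2 (by omega)
  have hexp : (k + 1) * (k + 1) = k * k + 2 * k + 1 := by ring
  obtain ⟨r, hr⟩ : ∃ r, a - k * k = r := ⟨_, rfl⟩
  have hra : a = k * k + r := by omega
  have hr2k : r ≤ 2 * k := by omega
  obtain ⟨c, hc⟩ : ∃ c, (3 * (k * k) + k + 3 * r) % 4 = c := ⟨_, rfl⟩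
  have hc3 : c ≤ 3 := by omega
  have hkk2 : 2 ∣ k * k + k := by
    obtain ⟨m, hm⟩ := Nat.even_mul_succ_self k
    have hx : k * (k + 1) = k * k + k := by ring
    omega
  obtain ⟨cap, hcap⟩ : ∃ cap, max 3 (12 - k) = cap := ⟨_, rfl⟩
  have hcap3 : 3 ≤ cap := by omega
  obtain ⟨d, hd⟩ : ∃ d, k - c = d := ⟨_, rfl⟩
  have hd1 : 0 < d := by omega
  have hdk : d ≤ k := by omega
  obtain ⟨cc, hcc⟩ : ∃ cc, c * c = cc := ⟨_, rfl⟩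
  have hcc9 : cc ≤ 9 ∧ cc % 2 = c % 2 := by interval_cases c <;> omega
  obtain ⟨q, hq⟩ : ∃ q, (r + cc) / 2 = q := ⟨_, rfl⟩
  have hq2 : 2 * q = r + cc := by omega
  have hq4 : q ≤ k + 4 := by omega
  have hqcap : q ≤ cap * d := by
    rw [← hd]
    exact caplem k c q cap hk4 hc3 hcap hq4
  obtain ⟨μ, hcard, htr, hcol, hfil⟩ :=
    key' d (fun i => (k - 1 - i) + min cap (q - cap * i)) hd1 (strictanti k cap q d hdk)
  refine ⟨μ, ?_, htr, ?_, ?_⟩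
  · rw [hcard]
    exact sumcard a k r c cc cap q d hra hc3 (by omega) hd hdk hcc hq2 hqcap
  · rw [hcol, hksq]
    have hz : cap * 0 = 0 := mul_zero cap
    omega
  · rw [hfil]
    exact sumeven k r c cc cap q d hd1 hkk2 hc hc3 (by omega) hd hdk hcc hq2 hqcap

lemma explicitCase (d : ℕ) (v : ℕ → ℕ) (a : ℕ) (hd : 0 < d)
    (hv : ∀ i j, i < j → j < d → v j < v i)
    (h1 : ∑ i ∈ range d, (2 * v i + 1) = a)
    (h2 : v 0 + 1 ≤ 12)
    (h3 : (∑ i ∈ range d, v i) % 2 = 0) :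
    ∃ μ : YoungDiagram, μ.card = a ∧ μ.transpose = μ ∧
      μ.colLen 0 ≤ max (Nat.sqrt a + 3) 12 ∧
      Even ((μ.cells.filter (fun c => c.1 < c.2)).card) := by
  obtain ⟨μ, hc, ht, hl, hf⟩ := key' d v hd hv
  refine ⟨μ, by omega, ht, by omega, ?_⟩
  rw [hf, Nat.even_iff]
  exact h3

end SelfConj

/-- For every `a ≥ 1` outside `{2, 3, 4, 7, 8, 12}` there is a self-conjugate
partition of `a` with at most `max (⌊√a⌋ + 3) 12` parts having an even number
of cells strictly above the main diagonal. -/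
theorem exists_self_conjugate_even_sign (a : ℕ) (ha : 1 ≤ a)
    (hx : a ∉ ({2, 3, 4, 7, 8, 12} : Finset ℕ)) :
    ∃ μ : YoungDiagram, μ.card = a ∧ μ.transpose = μ ∧
      μ.colLen 0 ≤ max (Nat.sqrt a + 3) 12 ∧
      Even ((μ.cells.filter (fun c => c.1 < c.2)).card) := by
  rcases le_or_gt 16 a with h16 | h16
  · exact SelfConj.main16 a h16
  · have hlist : ∀ (l : List ℕ), ∀ i j : ℕ, i < j → j < l.length →
        ((l.getD · 0) j) < ((l.getD · 0) i) → True := fun _ _ _ _ _ _ => trivial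
    interval_cases a
    · exact SelfConj.explicitCase 1 (fun i => [0].getD i 0) 1 one_pos
        (by intro i j hij hjd; omega)
        (by decide) (by decide) (by decide)
    · exact absurd (by decide) hx
    · exact absurd (by decide) hx
    · exact absurd (by decide) hx
    · exact SelfConj.explicitCase 1 (fun i => [2].getD i 0) 5 one_pos
        (by intro i j hij hjd; omega)
        (by decide) (by decide) (by decide)
    · exact SelfConj.explicitCase 2 (fun i => [2,0].getD i 0) 6 two_pos
        (by intro i j hij hjd; interval_cases j <;> interval_cases i <;> decide)
        (by decide) (by decide) (by decide)
    · exact absurd (by decide) hx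
    · exact absurd (by decide) hx
    · exact SelfConj.explicitCase 1 (fun i => [4].getD i 0) 9 one_pos
        (by intro i j hij hjd; omega)
        (by decide) (by decide) (by decide)
    · exact SelfConj.explicitCase 2 (fun i => [4,0].getD i 0) 10 two_pos
        (by intro i j hij hjd; interval_cases j <;> interval_cases i <;> decide)
        (by decide) (by decide) (by decide)
    · exact SelfConj.explicitCase 3 (fun i => [3,1,0].getD i 0) 11 three_pos
        (by intro i j hij hjd; interval_cases j <;> interval_cases i <;> decide)
        (by decide) (by decide) (by decide)
    · exact absurd (by decide) hx
    · exact SelfConj.explicitCase 1 (fun i => [6].getD i 0) 13 one_pos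
        (by intro i j hij hjd; omega)
        (by decide) (by decide) (by decide)
    · exact SelfConj.explicitCase 2 (fun i => [6,0].getD i 0) 14 two_pos
        (by intro i j hij hjd; interval_cases j <;> interval_cases i <;> decide)
        (by decide) (by decide) (by decide)
    · exact SelfConj.explicitCase 3 (fun i => [3,2,1].getD i 0) 15 three_pos
        (by intro i j hij hjd; interval_cases j <;> interval_cases i <;> decide)
        (by decide) (by decide) (by decide)
end

section
/- For every integer a ≥ 1 with a ∉ {1, 2, 5, 6, 10, 14}, there exists a self-conjugate partition ν of a with at most max(⌊√a⌋ + 3, 12) parts such that the number of cells of ν lying strictly above the main diagonal is odd. -/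
open Finset

/-- The cell set: a `b × b` square with arms `min w (m - w*i)` appended to row `i`
and mirrored legs appended to column `j`. -/
def sqS (b w m : ℕ) : Finset (ℕ × ℕ) :=
  (range b ×ˢ range b)
    ∪ (range b).biUnion (fun i => (range (min w (m - w * i))).image (fun r => (i, b + r)))
    ∪ (range b).biUnion (fun j => (range (min w (m - w * j))).image (fun r => (b + r, j)))

lemma mem_sqS {b w m i j : ℕ} : (i, j) ∈ sqS b w m ↔
    (i < b ∧ j < b) ∨ (i < b ∧ b ≤ j ∧ j - b < min w (m - w * i))
      ∨ (j < b ∧ b ≤ i ∧ i - b < min w (m - w * j)) := by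
  simp only [sqS, mem_union, mem_biUnion, mem_image, mem_range, mem_product, Prod.mk.injEq]
  constructor
  · rintro (((h1 | ⟨k, hk, r, hr, rfl, rfl⟩) | ⟨k, hk, r, hr, rfl, rfl⟩))
    · exact Or.inl h1
    · exact Or.inr (Or.inl ⟨hk, by omega, by omega⟩)
    · exact Or.inr (Or.inr ⟨hk, by omega, by omega⟩)
  · rintro (h1 | ⟨h1, h2, h3⟩ | ⟨h1, h2, h3⟩)
    · exact Or.inl (Or.inl h1)
    · exact Or.inl (Or.inr ⟨i, h1, j - b, h3, rfl, by omega⟩)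
    · exact Or.inr ⟨j, h1, i - b, h3, by omega, rfl⟩

lemma sqS_lower (b w m : ℕ) : IsLowerSet (↑(sqS b w m) : Set (ℕ × ℕ)) := by
  rintro ⟨i, j⟩ ⟨i', j'⟩ ⟨hi : i' ≤ i, hj : j' ≤ j⟩ hmem
  simp only [Finset.mem_coe, mem_sqS] at hmem ⊢
  have h1 : min w (m - w * i) ≤ min w (m - w * i') := by
    have := Nat.mul_le_mul_left w hi; omega
  have h2 : min w (m - w * j) ≤ min w (m - w * j') := by
    have := Nat.mul_le_mul_left w hj; omega
  rcases Nat.lt_or_ge j' b with hb | hb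
  · rcases Nat.lt_or_ge i' b with hbi | hbi
    · exact Or.inl ⟨hbi, hb⟩
    · refine Or.inr (Or.inr ⟨hb, hbi, ?_⟩)
      rcases hmem with h | h | h <;> omega
  · -- b ≤ j' ≤ j, so i' ≤ i < b and we are in the arm case
    refine Or.inr (Or.inl ⟨?_, hb, ?_⟩)
    · rcases hmem with h | h | h <;> omega
    · rcases hmem with h | h | h <;> omega

lemma arm_card (b w m : ℕ) (hm : m ≤ b * w) :
    ((range b).biUnion
      (fun i => (range (min w (m - w * i))).image (fun r => (i, b + r)))).card = m := by
  rw [Finset.card_biUnion]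
  · have key : ∀ i, min w (m - w * i) = min (w * (i + 1)) m - min (w * i) m := by
      intro i
      have h1 : w * (i + 1) = w * i + w := by ring
      omega
    calc ∑ i ∈ Finset.range b, ((range (min w (m - w * i))).image (fun r => (i, b + r))).card
        = ∑ i ∈ Finset.range b, min w (m - w * i) := by
          refine Finset.sum_congr rfl fun i _ => ?_
          rw [Finset.card_image_of_injective _ (fun x y hxy => by
            simpa using hxy), Finset.card_range]
      _ = ∑ i ∈ Finset.range b, (min (w * (i + 1)) m - min (w * i) m) :=
          Finset.sum_congr rfl fun i _ => key i
      _ = min (w * b) m - min (w * 0) m :=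
          Finset.sum_range_tsub (f := fun i => min (w * i) m) (fun x y hxy => by
            have := Nat.mul_le_mul_left w hxy
            exact min_le_min this le_rfl) b
      _ = m := by
          have : m ≤ w * b := by rw [mul_comm]; exact hm
          omega
  · intro x _ y _ hxy
    simp only [Finset.disjoint_left, mem_image, mem_range]
    rintro ⟨p, q⟩ ⟨r, hr, h⟩ ⟨r', hr', h'⟩
    apply hxy
    simp only [Prod.mk.injEq] at h h'
    omega

lemma leg_card (b w m : ℕ) (hm : m ≤ b * w) :
    ((range b).biUnion
      (fun j => (range (min w (m - w * j))).image (fun r => (b + r, j)))).card = m := by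
  rw [show ((range b).biUnion
      (fun j => (range (min w (m - w * j))).image (fun r => (b + r, j))))
    = ((range b).biUnion
      (fun i => (range (min w (m - w * i))).image (fun r => (i, b + r)))).image Prod.swap by
      rw [Finset.biUnion_image]
      refine Finset.biUnion_congr rfl fun i _ => ?_
      rw [Finset.image_image]
      rfl]
  · rw [Finset.card_image_of_injective _ Prod.swap_injective]
    exact arm_card b w m hm

lemma sqS_card (b w m : ℕ) (hm : m ≤ b * w) : (sqS b w m).card = b * b + 2 * m := by
  have d1 : Disjoint
      ((range b ×ˢ range b) ∪ (range b).biUnion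
        (fun i => (range (min w (m - w * i))).image (fun r => (i, b + r))))
      ((range b).biUnion (fun j => (range (min w (m - w * j))).image (fun r => (b + r, j)))) := by
    simp only [Finset.disjoint_left, mem_union, mem_biUnion, mem_image, mem_range, mem_product]
    rintro ⟨p, q⟩ (h | ⟨k, hk, r, hr, h⟩) ⟨k', hk', r', hr', h'⟩ <;>
      simp only [Prod.mk.injEq] at * <;> omega
  have d2 : Disjoint (range b ×ˢ range b)
      ((range b).biUnion (fun i => (range (min w (m - w * i))).image (fun r => (i, b + r)))) := by
    simp only [Finset.disjoint_left, mem_biUnion, mem_image, mem_range, mem_product]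
    rintro ⟨p, q⟩ h ⟨k, hk, r, hr, h'⟩
    simp only [Prod.mk.injEq] at *
    omega
  rw [sqS, Finset.card_union_of_disjoint d1, Finset.card_union_of_disjoint d2,
    arm_card b w m hm, leg_card b w m hm, Finset.card_product, Finset.card_range]
  ring

lemma mem_sqS_swap {b w m i j : ℕ} : (i, j) ∈ sqS b w m ↔ (j, i) ∈ sqS b w m := by
  rw [mem_sqS, mem_sqS]; tauto

lemma sqS_diag_card (b w m : ℕ) :
    ((sqS b w m).filter (fun c => c.1 = c.2)).card = b := by
  have : (sqS b w m).filter (fun c => c.1 = c.2) = (range b).image (fun i => (i, i)) := by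
    ext ⟨i, j⟩
    simp only [mem_filter, mem_image, mem_range, Prod.mk.injEq, mem_sqS]
    constructor
    · rintro ⟨h, rfl⟩
      exact ⟨i, by omega, rfl, rfl⟩
    · rintro ⟨k, hk, rfl, rfl⟩
      exact ⟨Or.inl ⟨hk, hk⟩, rfl⟩
  rw [this, Finset.card_image_of_injective _ (fun x y h => by simpa using h),
    Finset.card_range]

lemma sqS_gt_card (b w m : ℕ) :
    ((sqS b w m).filter (fun c => c.2 < c.1)).card
      = ((sqS b w m).filter (fun c => c.1 < c.2)).card := by
  rw [show (sqS b w m).filter (fun c => c.2 < c.1)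
      = ((sqS b w m).filter (fun c => c.1 < c.2)).image Prod.swap by
    ext ⟨i, j⟩
    simp only [mem_filter, mem_image, Prod.exists, Prod.swap_prod_mk, Prod.mk.injEq]
    constructor
    · rintro ⟨h, hlt⟩
      exact ⟨j, i, ⟨mem_sqS_swap.mp h, hlt⟩, rfl, rfl⟩
    · rintro ⟨p, q, ⟨h, hlt⟩, rfl, rfl⟩
      exact ⟨mem_sqS_swap.mp h, hlt⟩]
  rw [Finset.card_image_of_injective _ Prod.swap_injective]

lemma sqS_split (b w m : ℕ) :
    2 * ((sqS b w m).filter (fun c => c.1 < c.2)).card + b = (sqS b w m).card := by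
  have h1 := Finset.card_filter_add_card_filter_not
    (s := sqS b w m) (p := fun c => c.1 < c.2)
  have h2 := Finset.card_filter_add_card_filter_not
    (s := (sqS b w m).filter (fun c => ¬ c.1 < c.2)) (p := fun c => c.1 = c.2)
  rw [Finset.filter_filter, Finset.filter_filter] at h2
  have e1 : (sqS b w m).filter (fun c => ¬ c.1 < c.2 ∧ c.1 = c.2)
      = (sqS b w m).filter (fun c => c.1 = c.2) := by
    apply Finset.filter_congr; rintro ⟨i, j⟩ _; simp; omega
  have e2 : (sqS b w m).filter (fun c => ¬ c.1 < c.2 ∧ ¬ c.1 = c.2)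
      = (sqS b w m).filter (fun c => c.2 < c.1) := by
    apply Finset.filter_congr; rintro ⟨i, j⟩ _; simp; omega
  rw [e1, e2, sqS_diag_card, sqS_gt_card] at h2
  omega

/-- Master construction lemma. -/
lemma master (b w m : ℕ) (hb : 1 ≤ b) (hm : m ≤ b * w) :
    ∃ ν : YoungDiagram, ν.card = b * b + 2 * m ∧ ν.transpose = ν ∧
      ν.colLen 0 ≤ b + w ∧
      2 * ((ν.cells.filter (fun c => c.1 < c.2)).card) + b = b * b + 2 * m := by
  refine ⟨⟨sqS b w m, sqS_lower b w m⟩, ?_, ?_, ?_, ?_⟩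
  · rw [YoungDiagram.card]; exact sqS_card b w m hm
  · apply YoungDiagram.ext
    ext ⟨i, j⟩
    rw [show ((i, j) ∈ ({ cells := sqS b w m, isLowerSet := sqS_lower b w m } :
        YoungDiagram).transpose.cells) ↔ (j, i) ∈ sqS b w m from YoungDiagram.mem_transpose]
    exact mem_sqS_swap.symm
  · rw [← Nat.not_lt, ← YoungDiagram.mem_iff_lt_colLen]
    intro hmem
    rw [YoungDiagram.mem_mk, mem_sqS] at hmem
    omega
  · rw [← sqS_card b w m hm]
    exact sqS_split b w m

lemma arith (a : ℕ) (ha3 : 3 ≤ a) (h5 : a ≠ 5) (h6 : a ≠ 6) (h10 : a ≠ 10) (h14 : a ≠ 14) :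
    ∃ b, 1 ≤ b ∧ b * b ≤ a ∧ (a - b) % 4 = 2 ∧ b ≤ max (Nat.sqrt a + 3) 12 ∧
      a ≤ b * b + 2 * (b * (max (Nat.sqrt a + 3) 12 - b)) := by
  rcases Nat.lt_or_ge a 49 with hsmall | hbig
  · obtain ⟨b, h1, h2, h3, h4, h5⟩ :
        ∃ b, 1 ≤ b ∧ b * b ≤ a ∧ (a - b) % 4 = 2 ∧ b ≤ 12 ∧
          a ≤ b * b + 2 * (b * (12 - b)) := by
      interval_cases a <;>
        first
          | (exact ⟨1, by decide⟩)
          | (exact ⟨2, by decide⟩)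
          | (exact ⟨3, by decide⟩)
          | (exact ⟨4, by decide⟩)
          | (exact ⟨5, by decide⟩)
          | (exact ⟨6, by decide⟩)
          | omega
    have h12 : 12 ≤ max (Nat.sqrt a + 3) 12 := le_max_right _ _
    have hcap : b * (12 - b) ≤ b * (max (Nat.sqrt a + 3) 12 - b) :=
      Nat.mul_le_mul_left b (by omega)
    exact ⟨b, h1, h2, h3, by omega, by omega⟩
  · set s := Nat.sqrt a with hs
    have hs1 : s * s ≤ a := by have h := Nat.sqrt_le' a; rwa [pow_two] at h
    have hs2 : a < (s + 1) * (s + 1) := by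
      have h := Nat.lt_succ_sqrt' a
      rwa [pow_two, Nat.succ_eq_add_one] at h
    have hsa : s ≤ a := Nat.sqrt_le_self a
    have hs7 : 7 ≤ s := by nlinarith
    set r := (s + 3 * a + 2) % 4 with hr
    have hr3 : r < 4 := Nat.mod_lt _ (by norm_num)
    set b := s - r with hb
    have hb4 : 4 ≤ b := by omega
    have hbr : b + r = s := by omega
    have hba : b * b ≤ a := le_trans (Nat.mul_le_mul (by omega) (by omega)) hs1
    have hM : s + 3 ≤ max (s + 3) 12 := le_max_left _ _
    refine ⟨b, by omega, hba, by omega, by omega, ?_⟩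
    have hcap1 : a ≤ b * b + 2 * (b * (r + 3)) := by
      rw [← hbr] at hs2
      nlinarith
    have hcap2 : b * (r + 3) ≤ b * (max (s + 3) 12 - b) :=
      Nat.mul_le_mul_left b (by omega)
    omega

/-- For every `a ≥ 1` outside `{1, 2, 5, 6, 10, 14}` there is a self-conjugate
partition of `a` with at most `max (⌊√a⌋ + 3) 12` parts having an odd number
of cells strictly above the main diagonal. -/
theorem exists_self_conjugate_odd_sign (a : ℕ) (ha : 1 ≤ a)
    (hx : a ∉ ({1, 2, 5, 6, 10, 14} : Finset ℕ)) :
    ∃ ν : YoungDiagram, ν.card = a ∧ ν.transpose = ν ∧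
      ν.colLen 0 ≤ max (Nat.sqrt a + 3) 12 ∧
      Odd ((ν.cells.filter (fun c => c.1 < c.2)).card) := by
  simp only [Finset.mem_insert, Finset.mem_singleton] at hx
  obtain ⟨b, hb1, hba, hmod4, hble, hcap⟩ :=
    arith a (by omega) (by omega) (by omega) (by omega) (by omega)
  set M := max (Nat.sqrt a + 3) 12 with hM
  have hbsq : b * b % 2 = b % 2 := by
    rcases Nat.mod_two_eq_zero_or_one b with h | h <;> rw [Nat.mul_mod, h] <;> simp [h]
  have hbb : b ≤ b * b := Nat.le_mul_of_pos_left b hb1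
  set m := (a - b * b) / 2 with hm
  have h2m : b * b + 2 * m = a := by omega
  have hmw : m ≤ b * (M - b) := by omega
  obtain ⟨ν, hcard, htr, hcol, hsum⟩ := master b (M - b) m hb1 hmw
  refine ⟨ν, by omega, htr, by omega, ?_⟩
  rw [Nat.odd_iff]
  omega
end

section
/- For every a ∈ {2, 3, 4, 7, 8, 12}, every self-conjugate partition of a has an odd number of cells strictly above the main diagonal; and for every a ∈ {1, 2, 5, 6, 10, 14}, every self-conjugate partition of a has an even number of cells strictly above the main diagonal. (These are exactly the exceptional column lengths for which sm(1^a, ℓ), respectively am(1^a, ℓ), vanishes.) -/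
private lemma range_subset_of_dc (S : Finset ℕ) (hS : ∀ i ∈ S, ∀ j ≤ i, j ∈ S) :
    Finset.range S.card ⊆ S := by
  intro i hi
  by_contra hiS
  have hsub : S ⊆ Finset.range i := by
    intro s hs
    rw [Finset.mem_range]
    by_contra hsi
    exact hiS (hS s hs i (le_of_not_gt hsi))
  have := Finset.card_le_card hsub
  rw [Finset.card_range] at this
  rw [Finset.mem_range] at hi
  omega

private lemma key (μ : YoungDiagram) (h : μ.transpose = μ) :
    ∃ d, μ.card = d + 2 * (μ.cells.filter (fun c => c.1 < c.2)).card ∧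
      d * d ≤ μ.card ∧ (μ.card ≠ 0 → 1 ≤ d) := by
  classical
  set A := μ.cells.filter (fun c => c.1 < c.2) with hA
  set B := μ.cells.filter (fun c => c.2 < c.1) with hB
  set D := μ.cells.filter (fun c => c.1 = c.2) with hD
  have hmem : ∀ i j : ℕ, (j, i) ∈ μ ↔ (i, j) ∈ μ := by
    intro i j
    conv_lhs => rw [← h]
    simp [YoungDiagram.mem_transpose]
  -- A.card = B.card
  have hAB : A.card = B.card := by
    apply Finset.card_bij (fun c _ => (c.2, c.1))
    · rintro ⟨x, y⟩ hc
      simp only [hA, hB, Finset.mem_filter, YoungDiagram.mem_cells] at hc ⊢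
      exact ⟨(hmem x y).2 hc.1, hc.2⟩
    · rintro ⟨x, y⟩ _ ⟨x', y'⟩ _ hcc'
      simp only [Prod.mk.injEq] at hcc' ⊢
      exact ⟨hcc'.2, hcc'.1⟩
    · rintro ⟨x, y⟩ hc
      refine ⟨(y, x), ?_, rfl⟩
      simp only [hA, hB, Finset.mem_filter, YoungDiagram.mem_cells] at hc ⊢
      exact ⟨(hmem x y).2 hc.1, hc.2⟩
  -- card split
  have hsplit : μ.card = D.card + 2 * A.card := by
    have hU : μ.cells = A ∪ (B ∪ D) := by
      ext ⟨x, y⟩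
      simp only [hA, hB, hD, Finset.mem_union, Finset.mem_filter]
      constructor
      · intro hc
        rcases Nat.lt_trichotomy x y with h1 | h1 | h1
        · exact Or.inl ⟨hc, h1⟩
        · exact Or.inr (Or.inr ⟨hc, h1⟩)
        · exact Or.inr (Or.inl ⟨hc, h1⟩)
      · rintro (⟨hc, _⟩ | ⟨hc, _⟩ | ⟨hc, _⟩) <;> exact hc
    have hd1 : Disjoint A (B ∪ D) := by
      rw [Finset.disjoint_union_right]
      constructor <;> · rw [Finset.disjoint_filter]; intro c _ h1 h2; omega
    have hd2 : Disjoint B D := by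
      rw [Finset.disjoint_filter]; intro c _ h1 h2; omega
    have : μ.card = A.card + (B.card + D.card) := by
      rw [YoungDiagram.card, hU, Finset.card_union_of_disjoint hd1,
        Finset.card_union_of_disjoint hd2]
    omega
  refine ⟨D.card, hsplit, ?_, ?_⟩
  · -- square bound
    set T := (Finset.range μ.card).filter (fun i => (i, i) ∈ μ) with hT
    have hdiag_lt : ∀ i : ℕ, (i, i) ∈ μ → i < μ.card := by
      intro i hi
      have hsub : (Finset.range (i + 1)).image (fun j => (j, i)) ⊆ μ.cells := by
        intro c hc
        simp only [Finset.mem_image, Finset.mem_range] at hc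
        obtain ⟨j, hj, rfl⟩ := hc
        rw [YoungDiagram.mem_cells]
        exact μ.up_left_mem (by omega) le_rfl hi
      have hcard := Finset.card_le_card hsub
      rw [Finset.card_image_of_injective _ (fun a b hab => by
        simpa using (Prod.mk.injEq .. ▸ hab).1), Finset.card_range] at hcard
      exact hcard
    have hDT : D.card = T.card := by
      apply Finset.card_bij (fun c _ => c.1)
      · rintro ⟨x, y⟩ hc
        simp only [hD, Finset.mem_filter, YoungDiagram.mem_cells] at hc
        obtain ⟨hxy, rfl⟩ := hc
        simp only [hT, Finset.mem_filter, Finset.mem_range]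
        exact ⟨hdiag_lt _ hxy, hxy⟩
      · rintro ⟨x, y⟩ hc ⟨x', y'⟩ hc' hcc'
        simp only [hD, Finset.mem_filter] at hc hc'
        simp only at hcc'
        simp only [Prod.mk.injEq]
        omega
      · intro i hi
        simp only [hT, Finset.mem_filter, Finset.mem_range] at hi
        exact ⟨(i, i), by simp [hD, YoungDiagram.mem_cells, hi.2], rfl⟩
    have hTdc : ∀ i ∈ T, ∀ j ≤ i, j ∈ T := by
      intro i hi j hj
      simp only [hT, Finset.mem_filter, Finset.mem_range] at hi ⊢
      exact ⟨by omega, μ.up_left_mem hj hj hi.2⟩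
    have hrange : Finset.range T.card ⊆ T := range_subset_of_dc T hTdc
    have hsq : (Finset.range D.card) ×ˢ (Finset.range D.card) ⊆ μ.cells := by
      rintro ⟨x, y⟩ hc
      simp only [Finset.mem_product, Finset.mem_range] at hc
      rw [YoungDiagram.mem_cells]
      have hmT : max x y ∈ T := hrange (by rw [Finset.mem_range]; rw [hDT] at hc; omega)
      rw [hT, Finset.mem_filter] at hmT
      exact μ.up_left_mem (le_max_left _ _) (le_max_right _ _) hmT.2
    have := Finset.card_le_card hsq
    simpa [Finset.card_product] using this
  · -- d ≥ 1 if nonempty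
    intro hne
    have hcc : μ.cells.Nonempty := Finset.card_pos.mp (by
      rw [← YoungDiagram.card]; omega)
    obtain ⟨c, hc⟩ := hcc
    rw [YoungDiagram.mem_cells] at hc
    have h00 : (0, 0) ∈ μ := μ.up_left_mem (Nat.zero_le _) (Nat.zero_le _) hc
    have : (0, 0) ∈ D := by
      simp only [hD, Finset.mem_filter, YoungDiagram.mem_cells]
      exact ⟨h00, trivial⟩
    exact Finset.card_pos.mpr ⟨_, this⟩

/-- The exceptional column lengths: for `a ∈ {2, 3, 4, 7, 8, 12}` every
self-conjugate partition of `a` has an odd number of cells strictly above the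
main diagonal, and for `a ∈ {1, 2, 5, 6, 10, 14}` every self-conjugate
partition of `a` has an even number of such cells. -/
theorem exceptional_self_conjugate_signs :
    (∀ a ∈ ({2, 3, 4, 7, 8, 12} : Finset ℕ), ∀ μ : YoungDiagram,
      μ.card = a → μ.transpose = μ →
        Odd ((μ.cells.filter (fun c => c.1 < c.2)).card)) ∧
    (∀ a ∈ ({1, 2, 5, 6, 10, 14} : Finset ℕ), ∀ μ : YoungDiagram,
      μ.card = a → μ.transpose = μ →
        Even ((μ.cells.filter (fun c => c.1 < c.2)).card)) := by
  constructor <;>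
  · intro a ha μ hcard htr
    obtain ⟨d, h1, h2, h3⟩ := key μ htr
    rw [hcard] at h1 h2 h3
    fin_cases ha <;>
      simp only [Nat.odd_iff, Nat.even_iff] <;>
      (have hd : d < 4 := by nlinarith) <;>
      (have hd1 : 1 ≤ d := h3 (by omega)) <;>
      interval_cases d <;> omega
end

section
/- Let m ≥ 1 and set N = 2^m − 1. There exists an N×N matrix A whose entries are homogeneous linear forms (degree-1 homogeneous polynomials) in the m² variables x_{ij}, 1 ≤ i, j ≤ m, over ℂ, such that tr(A^m) = per_m, where per_m = Σ_{σ ∈ S_m} Π_{i=1}^m x_{i,σ(i)} is the m×m permanent polynomial. (Grenet's construction yields pc(per_m) ≤ 2^m − 1.) -/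
/-!
Grenet's algebraic branching program for the permanent has the subsets of `Fin m` as vertices
and an edge `S → insert j S` of weight `x_{|S|, j}` for `j ∉ S`; its paths from `∅` to `univ`
are the chains `∅ ⊂ {σ 0} ⊂ {σ 0, σ 1} ⊂ ⋯`, one for each permutation `σ`, of weight
`∏ i, x_{i, σ i}`. Identifying `univ` with `∅` leaves `2 ^ m - 1` vertices, and every edge raises
`|S|` by one modulo `m`. Hence every closed walk of length `m` meets `∅` exactly once, the `m`
levels contribute equally to `tr (A ^ m)`, and `tr (A ^ m) = m • (A ^ m) ∅ ∅ = m • per_m`.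
Over `ℂ` the factor `m` is absorbed by scaling `A` with an `m`-th root of `1 / m`.
-/

open Matrix Finset MvPolynomial

section LevelSum

variable {V G R : Type*} [Fintype V] [CommSemiring R]

theorem Matrix.sum_diag_mul_shift_level [DecidableEq G] [Add G] [IsRightCancelAdd G]
    (lvl : V → G) (d : G) {A : Matrix V V R} (hA : ∀ u v, A u v ≠ 0 → lvl v = lvl u + d)
    (M : Matrix V V R) (k : G) :
    ∑ v with lvl v = k, (A * M) v v = ∑ v with lvl v = k + d, (M * A) v v := by
  simp only [sum_filter, mul_apply, ite_sum_zero]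
  rw [sum_comm]
  refine sum_congr rfl fun u _ => sum_congr rfl fun v _ => ?_
  by_cases huv : A v u = 0
  · simp [huv]
  · simp only [hA v u huv, add_left_inj, mul_comm]

theorem Matrix.trace_pow_eq_nsmul_sum_level_zero [DecidableEq V] {m : ℕ} [NeZero m]
    (lvl : V → ZMod m) {A : Matrix V V R} (hA : ∀ u v, A u v ≠ 0 → lvl v = lvl u + 1) {n : ℕ}
    (hn : n ≠ 0) : trace (A ^ n) = m • ∑ v with lvl v = 0, (A ^ n) v v := by
  obtain ⟨n, rfl⟩ : ∃ k, n = k + 1 := ⟨n - 1, by omega⟩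
  have hstep (k : ZMod m) :
      ∑ v with lvl v = k, (A ^ (n + 1)) v v = ∑ v with lvl v = k + 1, (A ^ (n + 1)) v v := by
    rw [pow_succ', sum_diag_mul_shift_level lvl 1 hA, ← pow_succ, pow_succ']
  have hlevel (k : ZMod m) :
      ∑ v with lvl v = k, (A ^ (n + 1)) v v = ∑ v with lvl v = 0, (A ^ (n + 1)) v v := by
    rw [← ZMod.natCast_zmod_val k]
    induction k.val with
    | zero => rw [Nat.cast_zero]
    | succ j ih => rw [Nat.cast_succ, ← hstep, ih]
  simp only [trace, diag_apply]
  rw [← sum_fiberwise univ lvl, sum_congr rfl fun k _ => hlevel k, sum_const, card_univ,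
    ZMod.card]

end LevelSum

theorem Matrix.trace_reindex {ι κ R : Type*} [Fintype ι] [Fintype κ] [AddCommMonoid R]
    (e : ι ≃ κ) (M : Matrix ι ι R) : trace (reindex e e M) = trace M :=
  e.symm.sum_comp fun i => M i i

theorem Fin.image_snoc_univ {α : Type*} [DecidableEq α] {k : ℕ} (g : Fin k → α) (x : α) :
    univ.image (Fin.snoc g x : Fin (k + 1) → α) = insert x (univ.image g) := by
  ext a
  simp [Fin.exists_fin_succ', eq_comm, or_comm]

namespace Grenet

abbrev Vertex (m : ℕ) := {S : Finset (Fin m) // S.card < m}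

theorem card_vertex (m : ℕ) : Fintype.card (Vertex m) = 2 ^ m - 1 := by
  rw [Fintype.card_congr (Equiv.subtypeEquivRight fun S => by
      simpa using card_lt_iff_ne_univ S : Vertex m ≃ {S // S ≠ univ}),
    Fintype.card_subtype_compl, Fintype.card_finset, Fintype.card_fin, Fintype.card_unique]

variable {m : ℕ} [NeZero m]

def root : Vertex m := ⟨∅, by simp [NeZero.pos]⟩

def collapse (T : Finset (Fin m)) : Vertex m := if h : T.card < m then ⟨T, h⟩ else root

def row (S : Vertex m) : Fin m := ⟨S.1.card, S.2⟩

def level (S : Vertex m) : ZMod m := S.1.card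

theorem collapse_empty : collapse (∅ : Finset (Fin m)) = root := by
  simp [collapse, root, NeZero.pos]

theorem collapse_univ : collapse (univ : Finset (Fin m)) = root := by
  simp [collapse]

theorem collapse_of_card_lt {T : Finset (Fin m)} (h : T.card < m) : (collapse T).1 = T := by
  simp [collapse, h]

theorem row_collapse_of_card_lt {T : Finset (Fin m)} (h : T.card < m) :
    row (collapse T) = ⟨T.card, h⟩ := by
  simp [row, collapse, h]

theorem level_collapse_insert {S : Vertex m} {j : Fin m} (hj : j ∉ S.1) :
    level (collapse (insert j S.1)) = level S + 1 := by
  have hcard : (insert j S.1).card = S.1.card + 1 := card_insert_of_notMem hj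
  unfold collapse
  split_ifs with h
  · simp [level, hcard]
  · have : S.1.card + 1 = m := by have := S.2; omega
    simp only [level, root, card_empty, Nat.cast_zero]
    rw [← Nat.cast_succ, Nat.succ_eq_add_one, this, ZMod.natCast_self]

theorem level_eq_zero_iff {S : Vertex m} : level S = 0 ↔ S = root := by
  rw [level, ZMod.natCast_eq_zero_iff]
  constructor
  · intro h
    exact Subtype.ext (card_eq_zero.mp (Nat.eq_zero_of_dvd_of_lt h S.2))
  · rintro rfl
    simp [root]

variable (m) (R : Type*) [CommSemiring R]

noncomputable def matrix : Matrix (Vertex m) (Vertex m) (MvPolynomial (Fin m × Fin m) R) :=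
  of fun S T => ∑ j ∈ S.1ᶜ, if collapse (insert j S.1) = T then X (row S, j) else 0

variable {m R}

theorem matrix_isHomogeneous (S T : Vertex m) : (matrix m R S T).IsHomogeneous 1 :=
  IsHomogeneous.sum _ _ _ fun j _ => by
    split_ifs
    · exact isHomogeneous_X R _
    · exact isHomogeneous_zero _ _ _

theorem level_eq_of_matrix_ne_zero {S T : Vertex m} (h : matrix m R S T ≠ 0) :
    level T = level S + 1 := by
  obtain ⟨j, hj, hne⟩ := exists_ne_zero_of_sum_ne_zero h
  rw [ite_ne_right_iff] at hne
  rw [← hne.1, level_collapse_insert (mem_compl.mp hj)]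

theorem matrix_pow_root_apply (k : ℕ) (hk : k ≤ m) (T : Vertex m) :
    (matrix m R ^ k) root T = ∑ g : Fin k → Fin m,
      if Function.Injective g ∧ collapse (univ.image g) = T then
        ∏ i, X (Fin.castLE hk i, g i) else 0 := by
  induction k generalizing T with
  | zero => simp [one_apply, collapse_empty, Function.injective_of_subsingleton]
  | succ k ih =>
    rw [pow_succ, mul_apply, ← (Fin.snocEquiv fun _ => Fin m).sum_comp, Fintype.sum_prod_type,
      sum_comm]
    simp_rw [ih (by omega), sum_mul, ite_mul, zero_mul]
    rw [sum_comm]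
    refine sum_congr rfl fun g _ => ?_
    simp only [ite_and, sum_ite_irrel, sum_const_zero, Fin.snocEquiv, Equiv.coe_fn_mk,
      Fin.snoc_injective_iff, Fin.image_snoc_univ, Fin.prod_univ_castSucc, Fin.snoc_castSucc,
      Fin.snoc_last, Fin.castLE_castSucc]
    split_ifs with hg
    · have hcard : (univ.image g).card < m := by
        rw [card_image_of_injective _ hg, card_univ, Fintype.card_fin]; omega
      simp only [sum_ite_eq, mem_univ, if_true, matrix, of_apply, collapse_of_card_lt hcard,
        row_collapse_of_card_lt hcard, mul_sum]
      have hrow : (⟨_, hcard⟩ : Fin m) = Fin.castLE hk (Fin.last k) :=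
        Fin.ext (by simp [card_image_of_injective _ hg])
      rw [← sum_filter, hrow]
      exact sum_congr (by ext; simp) fun x _ => by rw [mul_ite, mul_zero]
    · simp

theorem matrix_pow_root_root :
    (matrix m R ^ m) root root = ∑ σ : Equiv.Perm (Fin m), ∏ i, X (i, σ i) := by
  have hclosed (g : Fin m → Fin m) (hg : Function.Injective g) :
      collapse (univ.image g) = root := by
    rw [image_univ_of_surjective (Finite.injective_iff_surjective.mp hg), collapse_univ]
  simp only [matrix_pow_root_apply m le_rfl, Fin.castLE_rfl, id,
    and_iff_left_of_imp (hclosed _), ← sum_filter]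
  symm
  refine sum_bij (fun σ _ => ⇑σ) (fun σ _ => mem_filter.mpr ⟨mem_univ _, σ.injective⟩)
    (fun _ _ _ _ h => DFunLike.coe_injective h) (fun g hg => ?_) (fun _ _ => rfl)
  exact ⟨Equiv.ofBijective g (Finite.injective_iff_bijective.mp (mem_filter.mp hg).2),
    mem_univ _, rfl⟩

theorem trace_matrix_pow :
    trace (matrix m R ^ m) = m • ∑ σ : Equiv.Perm (Fin m), ∏ i, X (i, σ i) := by
  rw [trace_pow_eq_nsmul_sum_level_zero level (fun _ _ => level_eq_of_matrix_ne_zero)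
    (NeZero.ne m)]
  simp only [level_eq_zero_iff, filter_eq', mem_univ, if_true, sum_singleton, matrix_pow_root_root]

end Grenet

/-- Grenet's construction: there is a `(2^m - 1) × (2^m - 1)` matrix `A` whose
entries are homogeneous linear forms in the `m²` variables `x_{ij}` such that
`tr(A^m)` is the `m × m` permanent polynomial. Hence `pc(per_m) ≤ 2^m - 1`. -/
theorem grenet_power_trace_permanent (m : ℕ) (hm : 1 ≤ m) :
    ∃ A : Matrix (Fin (2 ^ m - 1)) (Fin (2 ^ m - 1)) (MvPolynomial (Fin m × Fin m) ℂ),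
      (∀ i j, (A i j).IsHomogeneous 1) ∧
      (A ^ m).trace =
        ∑ σ : Equiv.Perm (Fin m), ∏ i : Fin m, MvPolynomial.X (i, σ i) := by
  have : NeZero m := ⟨by omega⟩
  obtain ⟨c, hc⟩ := IsAlgClosed.exists_pow_nat_eq (m⁻¹ : ℂ) (by omega : 0 < m)
  let e := Fintype.equivFinOfCardEq (Grenet.card_vertex m)
  refine ⟨reindex e e (c • Grenet.matrix m ℂ), fun i j => ?_, ?_⟩
  · rw [← mem_homogeneousSubmodule]
    exact Submodule.smul_mem _ c (Grenet.matrix_isHomogeneous _ _)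
  · rw [← coe_reindexAlgEquiv ℂ, ← map_pow, coe_reindexAlgEquiv, trace_reindex, smul_pow,
      trace_smul, Grenet.trace_matrix_pow, hc, ← Nat.cast_smul_eq_nsmul ℂ, smul_smul,
      inv_mul_cancel₀ (by exact_mod_cast NeZero.ne m), one_smul]
end
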